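/- arXiv:1903.08332 — 4 statements merged into one kernel-verified Lean document; each statement's English description precedes it below -/
import Mathlib

section
/- A finite simple graph is bipartite if and only if the spectrum of its adjacency matrix is symmetric about the origin, i.e., for every eigenvalue λ with multiplicity k, −λ is also an eigenvalue with multiplicity k. -/
open SimpleGraph Matrix Polynomial


lemma comp_negX_comp_negX {R : Type*} [CommRing R] (p : R[X]) :
    (p.comp (-X)).comp (-X) = p := by
  rw [Polynomial.comp_assoc]; simp

lemma dvd_comp_negX {R : Type*} [CommRing R] {p q : R[X]} (h : p ∣ q) :
    p.comp (-X) ∣ q.comp (-X) := by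
  obtain ⟨c, rfl⟩ := h
  exact ⟨c.comp (-X), by rw [mul_comp]⟩

lemma comp_negX_dvd_iff {R : Type*} [CommRing R] (p q : R[X]) :
    p.comp (-X) ∣ q.comp (-X) ↔ p ∣ q := by
  refine ⟨fun h => ?_, dvd_comp_negX⟩
  have := dvd_comp_negX h
  rwa [comp_negX_comp_negX, comp_negX_comp_negX] at this

lemma charpoly_neg' {n : Type*} [Fintype n] [DecidableEq n] {R : Type*} [CommRing R]
    (M : Matrix n n R) :
    (M.charpoly).comp (-X) = (-1 : R[X]) ^ Fintype.card n * (-M).charpoly := by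
  have f : R[X] →+* R[X] := (aeval (-X : R[X]) : R[X] →ₐ[R] R[X]).toRingHom
  have h0 : ∀ p : R[X], p.comp (-X) = aeval (-X : R[X]) p := fun p => by
    rw [aeval_def, Polynomial.algebraMap_eq, Polynomial.comp]
  have h1 : (M.charpoly).comp (-X)
      = ((charmatrix M).map ((aeval (-X : R[X]) : R[X] →ₐ[R] R[X]) : R[X] →+* R[X])).det := by
    rw [Matrix.charpoly, h0, ← AlgHom.coe_toRingHom, RingHom.map_det]
    rfl
  have h2 : (charmatrix M).map ((aeval (-X : R[X]) : R[X] →ₐ[R] R[X]) : R[X] →+* R[X])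
      = -(charmatrix (-M)) := by
    ext i j
    by_cases h : i = j
    · subst h; simp [charmatrix_apply_eq]; ring
    · simp [charmatrix_apply_ne _ _ _ h]
  rw [h1, h2, Matrix.det_neg, Matrix.charpoly]

lemma rootMultiplicity_charpoly_neg {n : Type*} [Fintype n] [DecidableEq n]
    {R : Type*} [Field R] (M : Matrix n n R) (lam : R) :
    ((-M).charpoly).rootMultiplicity lam = (M.charpoly).rootMultiplicity (-lam) := by
  have hp : M.charpoly ≠ 0 := M.charpoly_monic.ne_zero
  have hq : (-M).charpoly ≠ 0 := (-M).charpoly_monic.ne_zero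
  have key : ∀ k : ℕ, (X - C lam) ^ k ∣ (-M).charpoly ↔ (X - C (-lam)) ^ k ∣ M.charpoly := by
    intro k
    have hu : IsUnit ((-1 : R[X]) ^ Fintype.card n) := (isUnit_one.neg).pow _
    have huk : IsUnit ((-1 : R[X]) ^ k) := (isUnit_one.neg).pow _
    have h1 : (X - C lam) ^ k ∣ (-M).charpoly ↔ (X - C lam) ^ k ∣ M.charpoly.comp (-X) := by
      rw [charpoly_neg']
      exact (hu.dvd_mul_left).symm
    have h2 : (((X - C (-lam)) ^ k : R[X])).comp (-X) = (-1 : R[X]) ^ k * (X - C lam) ^ k := by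
      rw [pow_comp, sub_comp, X_comp, C_comp, ← neg_pow, map_neg, sub_neg_eq_add]
      ring_nf
    have h2' : (((X - C lam) ^ k : R[X])).comp (-X) = (-1 : R[X]) ^ k * (X - C (-lam)) ^ k := by
      rw [pow_comp, sub_comp, X_comp, C_comp, ← neg_pow, map_neg, sub_neg_eq_add]
      ring_nf
    have h3 : (X - C lam) ^ k ∣ M.charpoly.comp (-X) ↔ (X - C (-lam)) ^ k ∣ M.charpoly := by
      constructor
      · intro h
        have h4 := dvd_comp_negX h
        rw [comp_negX_comp_negX, h2'] at h4
        exact dvd_trans (Dvd.intro_left _ rfl) h4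
      · intro h
        have h4 := dvd_comp_negX h
        rw [h2] at h4
        exact dvd_trans (Dvd.intro_left _ rfl) h4
    exact h1.trans h3
  apply Nat.le_antisymm
  · rw [Polynomial.le_rootMultiplicity_iff hp, ← key]
    exact Polynomial.pow_rootMultiplicity_dvd _ _
  · rw [Polynomial.le_rootMultiplicity_iff hq, key]
    exact Polynomial.pow_rootMultiplicity_dvd _ _

lemma charpoly_conj_eq {n : Type*} [Fintype n] [DecidableEq n] {R : Type*} [CommRing R]
    (P Q M : Matrix n n R) (h1 : P * Q = 1) (h2 : Q * P = 1) :
    (P * M * Q).charpoly = M.charpoly := by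
  have hPQ : ((C : R →+* R[X]).mapMatrix P) * ((C : R →+* R[X]).mapMatrix Q) = 1 := by
    rw [← _root_.map_mul, h1, _root_.map_one]
  have hchar : charmatrix (P * M * Q)
      = (C : R →+* R[X]).mapMatrix P * charmatrix M * (C : R →+* R[X]).mapMatrix Q := by
    unfold charmatrix
    rw [Matrix.mul_sub, Matrix.sub_mul, _root_.map_mul, _root_.map_mul]
    congr 1
    have hs : Matrix.scalar n (X : R[X]) = (X : R[X]) • (1 : Matrix n n R[X]) := by
      ext i j
      by_cases h : i = j <;>
        simp [Matrix.scalar_apply, Matrix.one_apply, Matrix.diagonal_apply, h]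
    rw [hs, Matrix.mul_smul, Matrix.smul_mul, Matrix.mul_one, hPQ]
  rw [Matrix.charpoly, hchar, Matrix.det_mul, Matrix.det_mul, Matrix.charpoly]
  have hd : ((C : R →+* R[X]).mapMatrix P).det * ((C : R →+* R[X]).mapMatrix Q).det = 1 := by
    rw [← Matrix.det_mul, hPQ, Matrix.det_one]
  calc ((C : R →+* R[X]).mapMatrix P).det * (charmatrix M).det * ((C : R →+* R[X]).mapMatrix Q).det
      = (charmatrix M).det * (((C : R →+* R[X]).mapMatrix P).det * ((C : R →+* R[X]).mapMatrix Q).det) := by ring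
    _ = (charmatrix M).det := by rw [hd, mul_one]

lemma charpoly_diagonal {n : Type*} [Fintype n] [DecidableEq n] {R : Type*} [CommRing R]
    (d : n → R) : (Matrix.diagonal d).charpoly = ∏ i, (X - C (d i)) := by
  have h : charmatrix (Matrix.diagonal d) = Matrix.diagonal (fun i => X - C (d i)) := by
    ext i j
    by_cases h : i = j
    · subst h; simp
    · simp [h, Matrix.diagonal_apply_ne _ h]
  rw [Matrix.charpoly, h, Matrix.det_diagonal]

lemma conj_pow_eq {n : Type*} [Fintype n] [DecidableEq n] {R : Type*} [CommRing R]
    (U V D : Matrix n n R) (h1 : U * V = 1) (h2 : V * U = 1) (m : ℕ) :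
    (U * D * V) ^ m = U * D ^ m * V := by
  induction m with
  | zero => rw [pow_zero, pow_zero, Matrix.mul_one, h1]
  | succ k ih =>
    rw [pow_succ, ih, pow_succ]
    calc U * D ^ k * V * (U * D * V)
        = U * D ^ k * (V * U) * D * V := by simp only [Matrix.mul_assoc]
      _ = U * (D ^ k * D) * V := by
          rw [h2, Matrix.mul_one]; simp only [Matrix.mul_assoc]

lemma trace_pow_conj {n : Type*} [Fintype n] [DecidableEq n] {R : Type*} [CommRing R]
    (U V D : Matrix n n R) (h1 : U * V = 1) (h2 : V * U = 1) (m : ℕ) :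
    ((U * D * V) ^ m).trace = (D ^ m).trace := by
  rw [conj_pow_eq U V D h1 h2, Matrix.trace_mul_comm, ← Matrix.mul_assoc, h2, Matrix.one_mul]

lemma charpoly_hermitian_real {n : Type*} [Fintype n] [DecidableEq n]
    {A : Matrix n n ℝ} (hA : A.IsHermitian) :
    A.charpoly = ∏ i, (X - C (hA.eigenvalues i)) := by
  have hspec := hA.spectral_theorem
  have h1 : (hA.eigenvectorUnitary : Matrix n n ℝ) * star (hA.eigenvectorUnitary : Matrix n n ℝ)
      = 1 := (Matrix.mem_unitaryGroup_iff).mp hA.eigenvectorUnitary.2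
  have h2 : star (hA.eigenvectorUnitary : Matrix n n ℝ) * (hA.eigenvectorUnitary : Matrix n n ℝ)
      = 1 := (Matrix.mem_unitaryGroup_iff').mp hA.eigenvectorUnitary.2
  have hdiag : (RCLike.ofReal ∘ hA.eigenvalues : n → ℝ) = hA.eigenvalues := by
    ext i; simp
  rw [hdiag] at hspec
  calc A.charpoly = ((hA.eigenvectorUnitary : Matrix n n ℝ) * Matrix.diagonal hA.eigenvalues *
        star (hA.eigenvectorUnitary : Matrix n n ℝ)).charpoly := congrArg _ hspec
    _ = (Matrix.diagonal hA.eigenvalues).charpoly := charpoly_conj_eq _ _ _ h1 h2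
    _ = ∏ i, (X - C (hA.eigenvalues i)) := _root_.charpoly_diagonal _

lemma trace_pow_hermitian_real {n : Type*} [Fintype n] [DecidableEq n]
    {A : Matrix n n ℝ} (hA : A.IsHermitian) (m : ℕ) :
    (A ^ m).trace = ∑ i, hA.eigenvalues i ^ m := by
  have hspec := hA.spectral_theorem
  have h1 : (hA.eigenvectorUnitary : Matrix n n ℝ) * star (hA.eigenvectorUnitary : Matrix n n ℝ)
      = 1 := (Matrix.mem_unitaryGroup_iff).mp hA.eigenvectorUnitary.2
  have h2 : star (hA.eigenvectorUnitary : Matrix n n ℝ) * (hA.eigenvectorUnitary : Matrix n n ℝ)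
      = 1 := (Matrix.mem_unitaryGroup_iff').mp hA.eigenvectorUnitary.2
  have hdiag : (RCLike.ofReal ∘ hA.eigenvalues : n → ℝ) = hA.eigenvalues := by
    ext i; simp
  rw [hdiag] at hspec
  calc (A ^ m).trace = (((hA.eigenvectorUnitary : Matrix n n ℝ) *
        Matrix.diagonal hA.eigenvalues * star (hA.eigenvectorUnitary : Matrix n n ℝ)) ^ m).trace :=
      congrArg (fun B => (B ^ m).trace) hspec
    _ = ((Matrix.diagonal hA.eigenvalues) ^ m).trace := trace_pow_conj _ _ _ h1 h2 m
    _ = ∑ i, hA.eigenvalues i ^ m := by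
        rw [Matrix.diagonal_pow, Matrix.trace_diagonal]
        simp [Pi.pow_apply]

lemma sum_odd_pow_eq_zero_of_symm {n : Type*} [Fintype n] (e : n → ℝ)
    (h : ∀ lam : ℝ, (∏ i, (X - C (e i))).rootMultiplicity lam =
      (∏ i, (X - C (e i))).rootMultiplicity (-lam))
    (m : ℕ) (hm : Odd m) : ∑ i, e i ^ m = 0 := by
  set S : Multiset ℝ := Finset.univ.val.map e with hS
  have hprod : (∏ i, (X - C (e i)) : ℝ[X]) = (S.map (fun a => X - C a)).prod := by
    rw [hS, Multiset.map_map]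
    rfl
  have hroots : (∏ i, (X - C (e i)) : ℝ[X]).roots = S := by
    rw [hprod, Polynomial.roots_multiset_prod_X_sub_C]
  have hcount : ∀ lam : ℝ, S.count lam = S.count (-lam) := by
    intro lam
    rw [← hroots, Polynomial.count_roots, Polynomial.count_roots, h lam]
  have hT : S.map (fun x : ℝ => -x) = S := by
    ext a
    have h1 : (S.map (fun x : ℝ => -x)).count (-(-a)) = S.count (-a) :=
      Multiset.count_map_eq_count' _ _ neg_injective (-a)
    rw [neg_neg] at h1
    rw [h1, ← hcount]
  have hsum : ∑ i, e i ^ m = (S.map (fun x : ℝ => x ^ m)).sum := by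
    rw [hS, Multiset.map_map]
    rfl
  have h2 : (S.map (fun x : ℝ => x ^ m)).sum = -(S.map (fun x : ℝ => x ^ m)).sum := by
    conv_lhs => rw [← hT, Multiset.map_map]
    have : ((fun x : ℝ => x ^ m) ∘ fun x : ℝ => -x) = fun x : ℝ => -(x ^ m) := by
      funext x
      simp [Odd.neg_pow hm]
    rw [this]
    have := Multiset.sum_map_neg' (S.map (fun x : ℝ => x ^ m))
    rw [Multiset.map_map] at this
    exact this
  rw [hsum]
  linarith [h2]

lemma colorable_two_of_no_odd_walk {V : Type*} (G : SimpleGraph V)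
    (h : ∀ (v : V) (w : G.Walk v v), ¬ Odd w.length) : G.Colorable 2 := by
  classical
  have hreach : ∀ v : V, G.Reachable (G.connectedComponentMk v).out v := by
    intro v
    have h0 : G.connectedComponentMk (Quot.out (G.connectedComponentMk v))
        = G.connectedComponentMk v := Quot.out_eq _
    exact SimpleGraph.ConnectedComponent.exact h0
  let p : ∀ v : V, G.Walk (G.connectedComponentMk v).out v := fun v => (hreach v).some
  let c : V → Bool := fun v => decide (Odd (p v).length)
  have hvalid : ∀ {u v : V}, G.Adj u v → c u ≠ c v := by
    intro u v huv hc
    have hcomp : G.connectedComponentMk u = G.connectedComponentMk v :=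
      ConnectedComponent.sound huv.reachable
    have hout : (G.connectedComponentMk v).out = (G.connectedComponentMk u).out := by rw [hcomp]
    let q : G.Walk v (G.connectedComponentMk u).out := ((p v).copy hout rfl).reverse
    let w : G.Walk (G.connectedComponentMk u).out (G.connectedComponentMk u).out :=
      (p u).append (SimpleGraph.Walk.cons huv q)
    have hlen : w.length = (p u).length + (p v).length + 1 := by
      simp only [w, q, SimpleGraph.Walk.length_append, SimpleGraph.Walk.length_cons,
        SimpleGraph.Walk.length_reverse, SimpleGraph.Walk.length_copy]
      omega
    have hpar : (Odd (p u).length ↔ Odd (p v).length) := by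
      simpa [c, decide_eq_decide] using hc
    have : Odd w.length := by
      rw [hlen, Nat.odd_iff]
      rw [Nat.odd_iff, Nat.odd_iff] at hpar
      omega
    exact h _ w this
  have coloring : G.Coloring Bool := Coloring.mk c (fun huv => hvalid huv)
  have := coloring.colorable
  simpa using this

/-- A finite simple graph is bipartite (2-colorable) if and only if the spectrum of
its adjacency matrix is symmetric about the origin, i.e. every `λ` occurs as a root
of the characteristic polynomial with the same multiplicity as `-λ`. -/
theorem bipartite_iff_spectrum_symmetric {V : Type*} [Fintype V] [DecidableEq V]
    (G : SimpleGraph V) [DecidableRel G.Adj] :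
    G.Colorable 2 ↔
      ∀ lam : ℝ, ((G.adjMatrix ℝ).charpoly).rootMultiplicity lam =
        ((G.adjMatrix ℝ).charpoly).rootMultiplicity (-lam) := by
  constructor
  · intro hcol lam
    obtain ⟨C2⟩ := hcol
    let c : G.Coloring Bool := G.recolorOfEquiv finTwoEquiv C2
    let d : V → ℝ := fun v => if c v then 1 else -1
    have hdd : ∀ v, d v * d v = 1 := by
      intro v; by_cases h : c v <;> simp [d, h]
    have hDD : Matrix.diagonal d * Matrix.diagonal d = 1 := by
      rw [Matrix.diagonal_mul_diagonal]
      have : (fun v => d v * d v) = fun _ => (1 : ℝ) := funext hdd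
      rw [this, Matrix.diagonal_one]
    have hDAD : Matrix.diagonal d * (G.adjMatrix ℝ) * Matrix.diagonal d = -(G.adjMatrix ℝ) := by
      ext i j
      rw [Matrix.mul_diagonal, Matrix.diagonal_mul]
      by_cases h : G.Adj i j
      · have hcij : c i ≠ c j := c.valid h
        have : d i * d j = -1 := by
          by_cases hi : c i
          · have hj : ¬ c j := by simpa [hi] using hcij
            simp [d, hi, hj]
          · have hj : c j := by
              by_contra hj
              exact hcij (by simp [hi, hj, Bool.eq_iff_iff])
            simp [d, hi, hj]
        simp [SimpleGraph.adjMatrix_apply, h]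
        ring_nf
        linarith [this]
      · simp [SimpleGraph.adjMatrix_apply, h]
    have hneg : (-(G.adjMatrix ℝ)).charpoly = (G.adjMatrix ℝ).charpoly := by
      rw [← hDAD]
      exact charpoly_conj_eq _ _ _ hDD hDD
    have := rootMultiplicity_charpoly_neg (G.adjMatrix ℝ) lam
    rw [hneg] at this
    exact this
  · intro h
    by_contra hnc
    obtain ⟨v, w, hodd⟩ : ∃ (v : V) (w : G.Walk v v), Odd w.length := by
      by_contra h2
      push_neg at h2
      exact hnc (colorable_two_of_no_odd_walk G h2)
    have hA : (G.adjMatrix ℝ).IsHermitian := by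
      unfold Matrix.IsHermitian
      ext i j
      simp [Matrix.conjTranspose_apply, SimpleGraph.adjMatrix_apply, SimpleGraph.adj_comm]
    have hchar := charpoly_hermitian_real hA
    rw [hchar] at h
    have hsum : ∑ i, hA.eigenvalues i ^ w.length = 0 :=
      sum_odd_pow_eq_zero_of_symm _ h w.length hodd
    have htr : ((G.adjMatrix ℝ) ^ w.length).trace = 0 := by
      rw [trace_pow_hermitian_real hA w.length, hsum]
    have hdiag : ∀ u : V, (0 : ℝ) ≤ ((G.adjMatrix ℝ) ^ w.length) u u := by
      intro u
      rw [SimpleGraph.adjMatrix_pow_apply_eq_card_walk]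
      exact Nat.cast_nonneg _
    have hzero : ((G.adjMatrix ℝ) ^ w.length) v v = 0 := by
      rw [Matrix.trace] at htr
      have := (Finset.sum_eq_zero_iff_of_nonneg (fun u _ => hdiag u)).mp ?_ v (Finset.mem_univ v)
      · exact this
      · simpa [Matrix.diag] using htr
    rw [SimpleGraph.adjMatrix_pow_apply_eq_card_walk] at hzero
    have hpos : 0 < Fintype.card {p : G.Walk v v | p.length = w.length} :=
      Fintype.card_pos_iff.mpr ⟨⟨w, rfl⟩⟩
    rw [Nat.cast_eq_zero] at hzero
    omega
end

section
/- In a graph of girth g, every tailless backtrackless closed walk of length k < 2g traverses a single cycle of length k; consequently, the number of tailless backtrackless closed walks of length k equals 2k times the number of k-cycles, for k < 2g. -/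
open SimpleGraph Matrix Finset

variable {V : Type*} [Fintype V] [DecidableEq V]

namespace TBCAux

/-- Build a walk from a vertex sequence with adjacency. -/
def buildWalk {W : Type*} (G : SimpleGraph W) (w : ℕ → W) (hadj : ∀ t, G.Adj (w t) (w (t + 1))) :
    ∀ n : ℕ, G.Walk (w 0) (w n)
  | 0 => SimpleGraph.Walk.nil
  | n + 1 => (buildWalk G w hadj n).concat (hadj n)

variable {W : Type*}

lemma buildWalk_length (G : SimpleGraph W) (w : ℕ → W) (hadj : ∀ t, G.Adj (w t) (w (t + 1)))
    (n : ℕ) : (buildWalk G w hadj n).length = n := by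
  induction n with
  | zero => rfl
  | succ n ih => simp [buildWalk, SimpleGraph.Walk.length_concat, ih]

lemma buildWalk_support (G : SimpleGraph W) (w : ℕ → W) (hadj : ∀ t, G.Adj (w t) (w (t + 1)))
    (n : ℕ) : (buildWalk G w hadj n).support = (List.range (n + 1)).map w := by
  induction n with
  | zero => rfl
  | succ n ih =>
      rw [buildWalk, SimpleGraph.Walk.support_concat, ih, List.range_succ (n := n + 1)]
      simp

lemma buildWalk_edges (G : SimpleGraph W) (w : ℕ → W) (hadj : ∀ t, G.Adj (w t) (w (t + 1)))
    (n : ℕ) : (buildWalk G w hadj n).edges = (List.range n).map (fun t => s(w t, w (t + 1))) := by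
  induction n with
  | zero => rfl
  | succ n ih =>
      rw [buildWalk, SimpleGraph.Walk.edges_concat, ih, List.range_succ (n := n)]
      simp

lemma natCast_inj_of_lt {ℓ : ℕ} [NeZero ℓ] {t u : ℕ} (ht : t < ℓ) (hu : u < ℓ)
    (h : (t : ZMod ℓ) = u) : t = u := by
  have := congrArg ZMod.val h
  rwa [ZMod.val_cast_of_lt ht, ZMod.val_cast_of_lt hu] at this

lemma exists_cycle_of_inj (G : SimpleGraph W) {ℓ : ℕ} (hℓ : 3 ≤ ℓ)
    (w : ZMod ℓ → W) (hinj : Function.Injective w)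
    (hadj : ∀ t, G.Adj (w t) (w (t + 1))) :
    ∃ p : G.Walk (w 0) (w 0), p.IsCycle ∧ p.length = ℓ ∧
      p.edges = (List.range ℓ).map (fun t => s(w (t : ℕ), w ((t : ℕ) + 1))) := by
  haveI : NeZero ℓ := ⟨by omega⟩
  set wn : ℕ → W := fun t => w t with hwn
  have hadjn : ∀ t : ℕ, G.Adj (wn t) (wn (t + 1)) := by
    intro t; simpa [hwn] using hadj t
  have hend : wn ℓ = wn 0 := by simp [hwn]
  let p0 := buildWalk G wn hadjn ℓ
  have hu0 : wn 0 = w 0 := by simp [hwn]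
  have hv0 : wn ℓ = w 0 := by rw [hend]; exact hu0
  set pc := p0.copy hu0 hv0 with hpc
  have hlen : pc.length = ℓ := by
    rw [hpc, SimpleGraph.Walk.length_copy]; exact buildWalk_length G wn hadjn ℓ
  refine ⟨pc, ?_, hlen, ?_⟩
  · constructor
    · constructor
      · constructor
        rw [hpc, SimpleGraph.Walk.edges_copy, buildWalk_edges]
        rw [List.nodup_map_iff_inj_on List.nodup_range]
        intro t ht u hu heq
        rw [List.mem_range] at ht hu
        simp only [hwn] at heq
        rw [Sym2.eq_iff] at heq
        push_cast at heq
        rcases heq with ⟨h1, _⟩ | ⟨h1, h2⟩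
        · exact natCast_inj_of_lt ht hu (hinj h1)
        · exfalso
          have e1 : (t : ZMod ℓ) = u + 1 := hinj h1
          have e2 : (t : ZMod ℓ) + 1 = u := hinj h2
          have h20 : ((2 : ℕ) : ZMod ℓ) = 0 := by
            push_cast
            linear_combination e2 - e1
          rw [ZMod.natCast_eq_zero_iff] at h20
          exact absurd (Nat.le_of_dvd (by norm_num) h20) (by omega)
      · intro hnil
        rw [hnil] at hlen
        simp only [SimpleGraph.Walk.length_nil] at hlen
        omega
    · rw [hpc, SimpleGraph.Walk.support_copy, buildWalk_support]
      rw [List.range_succ_eq_map]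
      simp only [List.map_cons, List.tail_cons, List.map_map]
      rw [List.nodup_map_iff_inj_on List.nodup_range]
      intro t ht u hu heq
      rw [List.mem_range] at ht hu
      simp only [Function.comp_apply, hwn] at heq
      have h1 : ((t : ZMod ℓ) + 1 = (u : ZMod ℓ) + 1) := by
        apply hinj; push_cast at heq ⊢; exact heq
      exact natCast_inj_of_lt ht hu (add_right_cancel h1)
  · rw [hpc, SimpleGraph.Walk.edges_copy, buildWalk_edges]
    refine List.map_congr_left ?_
    intro t ht
    rw [List.mem_range] at ht
    simp only [hwn]
    congr 2
    push_cast
    ring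


lemma girth_le_length {G : SimpleGraph W} {a : W} {p : G.Walk a a} (hp : p.IsCycle) :
    G.girth ≤ p.length := by
  have h1 : G.egirth ≤ (p.length : ℕ∞) :=
    iInf_le_of_le a (iInf_le_of_le p (iInf_le_of_le hp le_rfl))
  have := ENat.toNat_le_toNat h1 (by simp)
  simpa [SimpleGraph.girth] using this

/-- Tailless backtrackless closed dart sequence. -/
def IsTBC {k : ℕ} (G : SimpleGraph W) (f : ZMod k → G.Dart) : Prop :=
  ∀ i, (f i).snd = (f (i + 1)).fst ∧ f (i + 1) ≠ (f i).symm

lemma IsTBC.shift {k : ℕ} {G : SimpleGraph W} {f : ZMod k → G.Dart} (hf : IsTBC G f)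
    (c : ZMod k) : IsTBC G (fun t => f (c + t)) := by
  intro i
  have h := hf (c + i)
  have e : c + (i + 1) = c + i + 1 := by ring
  refine ⟨?_, ?_⟩
  · show (f (c + i)).snd = (f (c + (i + 1))).fst
    rw [e]; exact h.1
  · show f (c + (i + 1)) ≠ (f (c + i)).symm
    rw [e]; exact h.2

lemma IsTBC.rev {k : ℕ} {G : SimpleGraph W} {f : ZMod k → G.Dart} (hf : IsTBC G f)
    (c : ZMod k) : IsTBC G (fun t => (f (c - t)).symm) := by
  intro i
  have h := hf (c - i - 1)
  have e1 : c - i - 1 + 1 = c - i := by ring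
  have e2 : c - (i + 1) = c - i - 1 := by ring
  constructor
  · show (f (c - i)).symm.snd = (f (c - (i + 1))).symm.fst
    rw [e2]
    show (f (c - i)).fst = (f (c - i - 1)).snd
    rw [h.1, e1]
  · show (f (c - (i + 1))).symm ≠ (f (c - i)).symm.symm
    rw [e2, SimpleGraph.Dart.symm_symm]
    intro hcon
    apply h.2
    rw [e1, ← hcon]

lemma IsTBC.three_le {k : ℕ} {G : SimpleGraph W} {f : ZMod k → G.Dart} (hf : IsTBC G f)
    (hk : 0 < k) : 3 ≤ k := by
  by_contra hlt
  interval_cases k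
  · have h := (hf 0).1
    have e : (0 + 1 : ZMod 1) = 0 := Subsingleton.elim _ _
    rw [e] at h
    exact SimpleGraph.Dart.fst_ne_snd (f 0) h.symm
  · have h0 := (hf 0).1
    have h1 := (hf 1).1
    rw [show (1 + 1 : ZMod 2) = 0 by decide] at h1
    apply (hf 0).2
    rw [show (0 + 1 : ZMod 2) = 1 by decide]
    ext : 1
    refine Prod.ext ?_ ?_
    · show (f 1).fst = (f 0).snd
      rw [show (0 + 1 : ZMod 2) = 1 by decide] at h0
      rw [h0]
    · show (f 1).snd = (f 0).fst
      rw [h1]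

lemma no_return {G : SimpleGraph W} {g k : ℕ} (hg : G.girth = g)
    {f : ZMod k → G.Dart} (hf : IsTBC G f) {m : ℕ} (hm1 : 1 ≤ m) (hmk : m < k)
    (hmg : m < g) (heq : (f 0).fst = (f (m : ZMod k)).fst) : False := by
  classical
  haveI : NeZero k := ⟨by omega⟩
  set v : ℕ → W := fun t => (f t).fst with hv
  have hchain : ∀ t : ℕ, (f (t : ZMod k)).snd = v (t + 1) := by
    intro t
    show (f (t : ZMod k)).snd = (f ((t + 1 : ℕ) : ZMod k)).fst
    push_cast
    exact (hf t).1
  have hQ : ∃ ℓ, ∃ i j : ℕ, i < j ∧ j ≤ m ∧ j - i = ℓ ∧ v i = v j :=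
    ⟨m, 0, m, by omega, le_refl m, by omega, by simpa [hv] using heq⟩
  set ℓ₀ := Nat.find hQ with hℓ₀
  obtain ⟨i, j, hij, hjm, hd, hveq⟩ := Nat.find_spec hQ
  have hmin : ∀ ℓ' < ℓ₀, ¬ ∃ i j : ℕ, i < j ∧ j ≤ m ∧ j - i = ℓ' ∧ v i = v j :=
    fun ℓ' h => Nat.find_min hQ h
  have hj : j = i + ℓ₀ := by omega
  have hℓ1 : 1 ≤ ℓ₀ := by omega
  have hℓm : ℓ₀ ≤ m := by omega
  have hinjseg : ∀ t u : ℕ, t < ℓ₀ → u < ℓ₀ → v (i + t) = v (i + u) → t = u := by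
    intro t u ht hu hvv
    rcases lt_trichotomy t u with h | h | h
    · exact absurd ⟨i + t, i + u, by omega, by omega, by omega, hvv⟩ (hmin (u - t) (by omega))
    · exact h
    · exact absurd ⟨i + u, i + t, by omega, by omega, by omega, hvv.symm⟩
        (hmin (t - u) (by omega))
  rcases Nat.lt_or_ge ℓ₀ 3 with hℓ3 | hℓ3
  · interval_cases ℓ₀
    · -- ℓ₀ = 1
      have : v i = v (i + 1) := by rwa [hj] at hveq
      rw [← hchain i] at this
      exact SimpleGraph.Dart.fst_ne_snd _ this
    · -- ℓ₀ = 2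
      have h1 : (f ((i : ℕ) : ZMod k)).snd = v (i + 1) := hchain i
      have h2 : (f ((i + 1 : ℕ) : ZMod k)).snd = v (i + 2) := hchain (i + 1)
      have h3 : v (i + 2) = v i := by rw [hj] at hveq; exact hveq.symm
      apply (hf (i : ZMod k)).2
      have hcast : ((i : ℕ) : ZMod k) + 1 = ((i + 1 : ℕ) : ZMod k) := by push_cast; ring
      rw [hcast]
      ext : 1
      refine Prod.ext ?_ ?_
      · show (f ((i + 1 : ℕ) : ZMod k)).fst = (f ((i : ℕ) : ZMod k)).snd
        rw [h1]
      · show (f ((i + 1 : ℕ) : ZMod k)).snd = (f ((i : ℕ) : ZMod k)).fst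
        rw [h2]; exact h3
  · -- ℓ₀ ≥ 3 : build a cycle of length ℓ₀ < g
    haveI : NeZero ℓ₀ := ⟨by omega⟩
    haveI : Fact (1 < ℓ₀) := ⟨by omega⟩
    set w : ZMod ℓ₀ → W := fun t => v (i + t.val) with hw
    have winj : Function.Injective w := by
      intro t u h
      exact ZMod.val_injective ℓ₀ (hinjseg t.val u.val (ZMod.val_lt t) (ZMod.val_lt u) h)
    have hstep : ∀ t : ZMod ℓ₀, w (t + 1) = v (i + t.val + 1) := by
      intro t
      by_cases hlt : t.val + 1 < ℓ₀
      · have hval : (t + 1).val = t.val + 1 := by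
          rw [ZMod.val_add_of_lt]; · rw [ZMod.val_one]
          rw [ZMod.val_one]; omega
        rw [hw]
        show v (i + (t + 1).val) = v (i + t.val + 1)
        rw [hval, ← Nat.add_assoc]
      · have hvt : t.val + 1 = ℓ₀ := by have := ZMod.val_lt t; omega
        have h0 : t + 1 = 0 := by
          have : ((t.val + 1 : ℕ) : ZMod ℓ₀) = 0 := by rw [hvt]; exact ZMod.natCast_self _
          push_cast at this
          rwa [ZMod.natCast_rightInverse t] at this
        rw [h0, hw]
        show v (i + (0 : ZMod ℓ₀).val) = v (i + t.val + 1)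
        rw [ZMod.val_zero, Nat.add_zero]
        have : v (i + t.val + 1) = v (i + ℓ₀) := by rw [Nat.add_assoc, hvt]
        rw [this, ← hj]
        exact hveq
    have hadjw : ∀ t, G.Adj (w t) (w (t + 1)) := by
      intro t
      rw [hstep]
      have hc := hchain (i + t.val)
      have : G.Adj (f ((i + t.val : ℕ) : ZMod k)).fst (f ((i + t.val : ℕ) : ZMod k)).snd :=
        (f _).adj
      rwa [hc] at this
    obtain ⟨p, hpc, hplen, -⟩ := exists_cycle_of_inj G hℓ3 w winj hadjw
    have hgl := girth_le_length hpc
    rw [hplen, hg] at hgl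
    omega

lemma vertex_inj {G : SimpleGraph W} {g k : ℕ} (hg : G.girth = g) (hk : 0 < k)
    (hk2g : k < 2 * g) {f : ZMod k → G.Dart} (hf : IsTBC G f) :
    Function.Injective (fun i : ZMod k => (f i).fst) := by
  haveI : NeZero k := ⟨hk.ne'⟩
  intro i j hij
  simp only at hij
  by_contra hne
  have hsub : j - i ≠ 0 := sub_ne_zero.mpr (fun h => hne h.symm)
  set a := (j - i).val with ha
  have ha1 : 1 ≤ a := Nat.pos_of_ne_zero (fun h => hsub ((ZMod.val_eq_zero _).mp h))
  have hak : a < k := ZMod.val_lt _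
  have hca : ((a : ℕ) : ZMod k) = j - i := ZMod.natCast_rightInverse _
  have hb : (i - j).val = k - a := by
    have hneg : i - j = -(j - i) := by ring
    rw [hneg, ZMod.neg_val, if_neg hsub]
  rcases Nat.lt_or_ge (2 * a) (k + 1) with h2 | h2
  · -- use shift by i, distance a
    have hf1 := hf.shift i
    refine no_return hg hf1 ha1 hak (by omega) ?_
    show (f (i + 0)).fst = (f (i + ((a : ℕ) : ZMod k))).fst
    rw [add_zero, hca, show i + (j - i) = j by ring]
    exact hij
  · -- use shift by j, distance k - a
    have hf2 := hf.shift j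
    have hcb : ((k - a : ℕ) : ZMod k) = i - j := by
      rw [← hb]; exact ZMod.natCast_rightInverse _
    refine no_return hg hf2 (m := k - a) (by omega) (by omega) (by omega) ?_
    show (f (j + 0)).fst = (f (j + ((k - a : ℕ) : ZMod k))).fst
    rw [add_zero, hcb, show j + (i - j) = i by ring]
    exact hij.symm

lemma edge_inj {G : SimpleGraph W} {k : ℕ} (h3 : 3 ≤ k) {f : ZMod k → G.Dart}
    (hf : IsTBC G f) (hinj : Function.Injective (fun i : ZMod k => (f i).fst)) :
    Function.Injective (fun i : ZMod k => (f i).edge) := by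
  intro i j h
  simp only at h
  have hedge : ∀ t : ZMod k, (f t).edge = s((f t).fst, (f (t + 1)).fst) := by
    intro t
    rw [← (hf t).1]
    rfl
  rw [hedge i, hedge j, Sym2.eq_iff] at h
  rcases h with ⟨h1, -⟩ | ⟨h1, h2⟩
  · exact hinj h1
  · exfalso
    have e1 : i = j + 1 := hinj h1
    have e2 : i + 1 = j := hinj h2
    have h20 : ((2 : ℕ) : ZMod k) = 0 := by push_cast; linear_combination e2 - e1
    rw [ZMod.natCast_eq_zero_iff] at h20
    exact absurd (Nat.le_of_dvd (by norm_num) h20) (by omega)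


lemma edge_eq {G : SimpleGraph W} {k : ℕ} {f : ZMod k → G.Dart} (hf : IsTBC G f)
    (t : ZMod k) : (f t).edge = s((f t).fst, (f (t + 1)).fst) := by
  rw [← (hf t).1]
  rfl

lemma tbc_to_cycle {G : SimpleGraph W} [DecidableEq W] {g k : ℕ} (hg : G.girth = g)
    (hk : 0 < k) (hk2g : k < 2 * g) {f : ZMod k → G.Dart} (hf : IsTBC G f) :
    ∃ (v : W) (p : G.Walk v v), p.IsCycle ∧ p.length = k ∧
      (Set.range fun i => (f i).edge) = ↑p.edges.toFinset := by
  haveI : NeZero k := ⟨hk.ne'⟩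
  have h3 := hf.three_le hk
  have hinj := vertex_inj hg hk hk2g hf
  have hadj : ∀ t : ZMod k, G.Adj (f t).fst (f (t + 1)).fst := by
    intro t
    have := (f t).adj
    rwa [(hf t).1] at this
  obtain ⟨p, hpc, hlen, hedges⟩ := exists_cycle_of_inj G h3 (fun i => (f i).fst) hinj hadj
  refine ⟨_, p, hpc, hlen, ?_⟩
  ext x
  simp only [Set.mem_range, Finset.coe_sort_coe, Finset.mem_coe, List.mem_toFinset, hedges,
    List.mem_map, List.mem_range]
  constructor
  · rintro ⟨i, rfl⟩
    refine ⟨i.val, ZMod.val_lt i, ?_⟩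
    rw [show ((i.val : ℕ) : ZMod k) = i from ZMod.natCast_rightInverse i]
    exact (edge_eq hf i).symm
  · rintro ⟨t, ht, rfl⟩
    exact ⟨(t : ZMod k), edge_eq hf t⟩

lemma rigid {G : SimpleGraph W} {k : ℕ} (h3 : 3 ≤ k) {f f' : ZMod k → G.Dart}
    (hf : IsTBC G f) (hf' : IsTBC G f')
    (hinj : Function.Injective (fun i : ZMod k => (f i).fst))
    (hsub : ∀ i, ∃ m, (f' i).edge = (f m).edge) (h0 : f' 0 = f 0) : f' = f := by
  haveI : NeZero k := ⟨by omega⟩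
  have key : ∀ n : ℕ, f' ((n : ℕ) : ZMod k) = f ((n : ℕ) : ZMod k) := by
    intro n
    induction n with
    | zero => simpa using h0
    | succ n ih =>
      have hcast : ((n + 1 : ℕ) : ZMod k) = ((n : ℕ) : ZMod k) + 1 := by push_cast; ring
      rw [hcast]
      obtain ⟨m, hm⟩ := hsub (((n : ℕ) : ZMod k) + 1)
      rcases (SimpleGraph.dart_edge_eq_iff _ _).mp hm with he | he
      · have hfst : (fun i : ZMod k => (f i).fst) m =
            (fun i : ZMod k => (f i).fst) (((n : ℕ) : ZMod k) + 1) := by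
          show (f m).fst = (f (((n : ℕ) : ZMod k) + 1)).fst
          rw [← he]
          show (f' (((n : ℕ) : ZMod k) + 1)).fst = _
          rw [← (hf' ((n : ℕ) : ZMod k)).1, ih, (hf ((n : ℕ) : ZMod k)).1]
        rw [he, hinj hfst]
      · exfalso
        have hfst : (fun i : ZMod k => (f i).fst) (m + 1) =
            (fun i : ZMod k => (f i).fst) (((n : ℕ) : ZMod k) + 1) := by
          show (f (m + 1)).fst = (f (((n : ℕ) : ZMod k) + 1)).fst
          rw [← (hf m).1]
          have : (f m).snd = (f' (((n : ℕ) : ZMod k) + 1)).fst := by rw [he]; rfl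
          rw [this, ← (hf' ((n : ℕ) : ZMod k)).1, ih, (hf ((n : ℕ) : ZMod k)).1]
        have hm1 : m = (n : ZMod k) := by
          have := hinj hfst
          exact add_right_cancel this
        apply (hf' ((n : ℕ) : ZMod k)).2
        rw [he, hm1, ← ih]
  funext i
  have := key i.val
  rwa [ZMod.natCast_rightInverse i] at this

lemma cycle_to_tbc {G : SimpleGraph W} {k : ℕ} (h3 : 3 ≤ k) {v : W} {p : G.Walk v v}
    (hpc : p.IsCycle) (hlen : p.length = k) :
    ∃ f : ZMod k → G.Dart, IsTBC G f ∧
      (Set.range fun i => (f i).edge) = {x | x ∈ p.edges} := by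
  haveI : NeZero k := ⟨by omega⟩
  haveI : Fact (1 < k) := ⟨by omega⟩
  have hd : p.darts.length = k := by rw [SimpleGraph.Walk.length_darts, hlen]
  have hlt : ∀ i : ZMod k, i.val < p.darts.length := fun i => by
    rw [hd]; exact ZMod.val_lt i
  have hidx : ∀ (a b : ℕ) (ha : a < p.darts.length) (hb : b < p.darts.length), a = b →
      p.darts.get ⟨a, ha⟩ = p.darts.get ⟨b, hb⟩ := by
    intro a b ha hb h
    subst h
    rfl
  have hpe : p.edges = p.darts.map SimpleGraph.Dart.edge := rfl
  have hnodup : (p.darts.map SimpleGraph.Dart.edge).Nodup := hpc.1.1.edges_nodup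
  have hget_ne : ∀ (a b : Fin p.darts.length), a ≠ b →
      (p.darts.get a).edge ≠ (p.darts.get b).edge := by
    intro a b hab hcon
    apply hab
    have ha : (p.darts.map SimpleGraph.Dart.edge).get ⟨a.val, by simpa using a.isLt⟩ =
        (p.darts.map SimpleGraph.Dart.edge).get ⟨b.val, by simpa using b.isLt⟩ := by
      simp only [List.get_eq_getElem, List.getElem_map]
      simpa [List.get_eq_getElem] using hcon
    have := (List.Nodup.get_inj_iff hnodup).mp ha
    exact Fin.ext (by simpa using congrArg Fin.val this)
  have hchain : ∀ (a : ℕ) (ha : a + 1 < p.darts.length),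
      (p.darts.get ⟨a, by omega⟩).snd = (p.darts.get ⟨a + 1, by omega⟩).fst := by
    intro a ha
    have hc := List.isChain_iff_getElem.mp (SimpleGraph.Walk.isChain_dartAdj_darts p)
    exact hc a (by omega)
  have hne : p.darts ≠ [] := by
    intro hcon
    rw [hcon] at hd
    simp at hd
    omega
  have hwrap_snd : (p.darts.get ⟨k - 1, by omega⟩).snd = v := by
    have h1 : (p.darts.getLast hne).snd = v := by
      rw [SimpleGraph.Walk.getLast_darts_eq_lastDart]; simp [SimpleGraph.Walk.lastDart_toProd]
    rw [List.getLast_eq_getElem] at h1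
    rw [List.get_eq_getElem]
    have e : k - 1 = p.darts.length - 1 := by omega
    simp_rw [e]
    exact h1
  have hwrap_fst : (p.darts.get ⟨0, by omega⟩).fst = v := by
    have h1 : (p.darts.head hne).fst = v := by
      rw [SimpleGraph.Walk.head_darts_eq_firstDart]; simp [SimpleGraph.Walk.firstDart_toProd]
    rw [List.head_eq_getElem_zero] at h1
    rw [List.get_eq_getElem]
    exact h1
  have hval1 : ∀ i : ZMod k, i.val + 1 < k → (i + 1).val = i.val + 1 := by
    intro i hi
    rw [ZMod.val_add_of_lt]
    · rw [ZMod.val_one]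
    · rw [ZMod.val_one]; omega
  have hval0 : ∀ i : ZMod k, i.val + 1 = k → (i + 1).val = 0 := by
    intro i hi
    have h1 : ((i.val + 1 : ℕ) : ZMod k) = 0 := by rw [hi]; exact ZMod.natCast_self _
    push_cast at h1
    rw [ZMod.natCast_rightInverse i] at h1
    rw [h1]
    exact ZMod.val_zero
  refine ⟨fun i => p.darts.get ⟨i.val, hlt i⟩, ?_, ?_⟩
  · intro i
    have hilt := ZMod.val_lt i
    constructor
    · show (p.darts.get ⟨i.val, hlt i⟩).snd = (p.darts.get ⟨(i + 1).val, hlt (i + 1)⟩).fst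
      by_cases hi : i.val + 1 < k
      · rw [hidx (i + 1).val (i.val + 1) (hlt _) (by omega) (hval1 i hi)]
        exact hchain i.val (by omega)
      · have hik : i.val + 1 = k := by omega
        rw [hidx (i + 1).val 0 (hlt _) (by omega) (hval0 i hik),
          hidx i.val (k - 1) (hlt _) (by omega) (by omega)]
        exact hwrap_snd.trans hwrap_fst.symm
    · show p.darts.get ⟨(i + 1).val, hlt (i + 1)⟩ ≠ (p.darts.get ⟨i.val, hlt i⟩).symm
      intro hcon
      have hvne : (i + 1).val ≠ i.val := by
        by_cases hi : i.val + 1 < k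
        · rw [hval1 i hi]; omega
        · rw [hval0 i (by omega)]; omega
      refine hget_ne ⟨(i + 1).val, hlt _⟩ ⟨i.val, hlt i⟩ (by simpa using hvne) ?_
      rw [hcon]
      exact SimpleGraph.Dart.edge_symm _
  · ext x
    simp only [Set.mem_range, Set.mem_setOf_eq]
    constructor
    · rintro ⟨i, rfl⟩
      rw [hpe]
      exact List.mem_map_of_mem (List.get_mem _ _)
    · intro hx
      rw [hpe, List.mem_map] at hx
      obtain ⟨d, hdmem, rfl⟩ := hx
      obtain ⟨⟨n, hn⟩, rfl⟩ := List.mem_iff_get.mp hdmem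
      refine ⟨(n : ZMod k), ?_⟩
      congr 1
      exact hidx _ n (hlt _) hn (ZMod.val_cast_of_lt (by omega))


lemma fiber_equiv {G : SimpleGraph W} {g k : ℕ} (hg : G.girth = g) (hk : 0 < k)
    (hk2g : k < 2 * g) {f₀ : ZMod k → G.Dart} (hf₀ : IsTBC G f₀) :
    Nonempty ({f : ZMod k → G.Dart // IsTBC G f ∧
      (Set.range fun i => (f i).edge) = (Set.range fun i => (f₀ i).edge)} ≃ ZMod k × Bool) := by
  have h3 := hf₀.three_le hk
  haveI : NeZero k := ⟨by omega⟩
  have hinj := vertex_inj hg hk hk2g hf₀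
  have hshift_range : ∀ j : ZMod k,
      (Set.range fun i => (f₀ (j + i)).edge) = Set.range fun i => (f₀ i).edge := by
    intro j
    have hs : Function.Surjective (fun i : ZMod k => j + i) := fun x => ⟨x - j, by ring⟩
    show Set.range ((fun i => (f₀ i).edge) ∘ (fun i : ZMod k => j + i)) = _
    exact hs.range_comp _
  have hrev_range : ∀ j : ZMod k,
      (Set.range fun i => ((f₀ (j - i)).symm).edge) = Set.range fun i => (f₀ i).edge := by
    intro j
    have he : (fun i : ZMod k => ((f₀ (j - i)).symm).edge) =
        ((fun i => (f₀ i).edge) ∘ (fun i : ZMod k => j - i)) := by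
      funext i
      exact SimpleGraph.Dart.edge_symm _
    rw [he]
    exact Function.Surjective.range_comp (fun x => ⟨j - x, by ring⟩) _
  refine ⟨(Equiv.ofBijective (fun jb : ZMod k × Bool =>
    cond jb.2
      (⟨fun i => (f₀ (jb.1 - i)).symm, hf₀.rev jb.1, hrev_range jb.1⟩ :
        {f : ZMod k → G.Dart // IsTBC G f ∧
          (Set.range fun i => (f i).edge) = (Set.range fun i => (f₀ i).edge)})
      ⟨fun i => f₀ (jb.1 + i), hf₀.shift jb.1, hshift_range jb.1⟩) ⟨?_, ?_⟩).symm⟩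
  · -- injective
    rintro ⟨j, b⟩ ⟨j', b'⟩ h
    have hfun := congrArg Subtype.val h
    cases b <;> cases b' <;> dsimp only [cond] at hfun ⊢
    · have h0 : f₀ (j + 0) = f₀ (j' + 0) := congrFun hfun 0
      have : j + 0 = j' + 0 := hinj (congrArg (fun d : G.Dart => d.fst) h0)
      simp only [add_zero] at this
      rw [this]
    · exfalso
      have h0 : f₀ (j + 0) = (f₀ (j' - 0)).symm := congrFun hfun 0
      rw [add_zero, sub_zero] at h0
      have e1 : (fun i : ZMod k => (f₀ i).fst) j = (fun i : ZMod k => (f₀ i).fst) (j' + 1) := by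
        show (f₀ j).fst = (f₀ (j' + 1)).fst
        rw [h0, ← (hf₀ j').1]
        rfl
      have e2 : (fun i : ZMod k => (f₀ i).fst) (j + 1) = (fun i : ZMod k => (f₀ i).fst) j' := by
        show (f₀ (j + 1)).fst = (f₀ j').fst
        rw [← (hf₀ j).1, h0]
        rfl
      have g1 : j = j' + 1 := hinj e1
      have g2 : j + 1 = j' := hinj e2
      have h20 : ((2 : ℕ) : ZMod k) = 0 := by push_cast; linear_combination g2 - g1
      rw [ZMod.natCast_eq_zero_iff] at h20
      exact absurd (Nat.le_of_dvd (by norm_num) h20) (by omega)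
    · exfalso
      have h0 : (f₀ (j - 0)).symm = f₀ (j' + 0) := congrFun hfun 0
      rw [add_zero, sub_zero] at h0
      have h0' : f₀ j' = (f₀ j).symm := h0.symm
      have e1 : (fun i : ZMod k => (f₀ i).fst) j' = (fun i : ZMod k => (f₀ i).fst) (j + 1) := by
        show (f₀ j').fst = (f₀ (j + 1)).fst
        rw [h0', ← (hf₀ j).1]
        rfl
      have e2 : (fun i : ZMod k => (f₀ i).fst) (j' + 1) = (fun i : ZMod k => (f₀ i).fst) j := by
        show (f₀ (j' + 1)).fst = (f₀ j).fst
        rw [← (hf₀ j').1, h0']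
        rfl
      have g1 : j' = j + 1 := hinj e1
      have g2 : j' + 1 = j := hinj e2
      have h20 : ((2 : ℕ) : ZMod k) = 0 := by push_cast; linear_combination g2 - g1
      rw [ZMod.natCast_eq_zero_iff] at h20
      exact absurd (Nat.le_of_dvd (by norm_num) h20) (by omega)
    · have h0 : (f₀ (j - 0)).symm = (f₀ (j' - 0)).symm := congrFun hfun 0
      have h1 : f₀ (j - 0) = f₀ (j' - 0) := SimpleGraph.Dart.symm_involutive.injective h0
      have : j - 0 = j' - 0 := hinj (congrArg (fun d : G.Dart => d.fst) h1)
      simp only [sub_zero] at this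
      rw [this]
  · -- surjective
    rintro ⟨f, hfT, hfR⟩
    have hsub : ∀ i, ∃ m, (f i).edge = (f₀ m).edge := by
      intro i
      have : (f i).edge ∈ Set.range fun i => (f₀ i).edge := by
        rw [← hfR]
        exact ⟨i, rfl⟩
      obtain ⟨m, hm⟩ := this
      exact ⟨m, hm.symm⟩
    obtain ⟨j, hj⟩ := hsub 0
    rcases (SimpleGraph.dart_edge_eq_iff _ _).mp hj with he | he
    · refine ⟨(j, false), ?_⟩
      apply Subtype.ext
      dsimp only [cond]
      have hinjs : Function.Injective (fun i : ZMod k => (f₀ (j + i)).fst) := by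
        intro a b hab
        have : j + a = j + b := hinj hab
        exact add_left_cancel this
      have hsub' : ∀ i, ∃ m, (f i).edge = ((fun i => f₀ (j + i)) m).edge := by
        intro i
        obtain ⟨m, hm⟩ := hsub i
        refine ⟨m - j, ?_⟩
        show (f i).edge = (f₀ (j + (m - j))).edge
        rw [show j + (m - j) = m by ring]
        exact hm
      have h00 : f 0 = (fun i => f₀ (j + i)) 0 := by
        show f 0 = f₀ (j + 0)
        rw [add_zero]
        exact he
      exact (rigid h3 (hf₀.shift j) hfT hinjs hsub' h00).symm
    · refine ⟨(j, true), ?_⟩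
      apply Subtype.ext
      dsimp only [cond]
      have hinjr : Function.Injective (fun i : ZMod k => ((f₀ (j - i)).symm).fst) := by
        intro a b hab
        have hab' : (fun i : ZMod k => (f₀ i).fst) (j - a + 1) =
            (fun i : ZMod k => (f₀ i).fst) (j - b + 1) := by
          show (f₀ (j - a + 1)).fst = (f₀ (j - b + 1)).fst
          rw [← (hf₀ (j - a)).1, ← (hf₀ (j - b)).1]
          exact hab
        have h1 : j - a + 1 = j - b + 1 := hinj hab'
        have h2 : j - a = j - b := add_right_cancel h1
        have : a = j - (j - a) := by ring
        rw [this, h2]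
        ring
      have hsub' : ∀ i, ∃ m, (f i).edge = (((fun i => (f₀ (j - i)).symm)) m).edge := by
        intro i
        obtain ⟨m, hm⟩ := hsub i
        refine ⟨j - m, ?_⟩
        show (f i).edge = ((f₀ (j - (j - m))).symm).edge
        rw [SimpleGraph.Dart.edge_symm, show j - (j - m) = m by ring]
        exact hm
      have h00 : f 0 = (fun i => (f₀ (j - i)).symm) 0 := by
        show f 0 = (f₀ (j - 0)).symm
        rw [sub_zero]
        exact he
      exact (rigid h3 (hf₀.rev j) hfT hinjr hsub' h00).symm

end TBCAux



/-- The number of tailless backtrackless closed walks of length `k`, counted as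
cyclic dart sequences with a marked starting position. -/
noncomputable def tbcCount (G : SimpleGraph V) (k : ℕ) : ℕ :=
  Nat.card {f : ZMod k → G.Dart //
    ∀ i, (f i).snd = (f (i + 1)).fst ∧ f (i + 1) ≠ (f i).symm}

/-- The number of `k`-cycles of `G`, i.e. cycle subgraphs with `k` edges,
identified by their edge sets. -/
noncomputable def cycleCount (G : SimpleGraph V) (k : ℕ) : ℕ :=
  Nat.card {s : Finset (Sym2 V) // ∃ (v : V) (p : G.Walk v v),
    p.IsCycle ∧ p.length = k ∧ p.edges.toFinset = s}

/-- In a graph of girth `g`, every tailless backtrackless closed walk of length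
`k < 2g` traverses a single cycle of length `k`; consequently the number of such
walks of length `k` equals `2k` times the number of `k`-cycles. -/
theorem tbc_walks_short_are_cycles (G : SimpleGraph V) [DecidableRel G.Adj] (g k : ℕ)
    (hg : G.girth = g) (hg3 : 3 ≤ g) (hk : 0 < k) (hk2g : k < 2 * g) :
    (∀ f : ZMod k → G.Dart,
      (∀ i, (f i).snd = (f (i + 1)).fst ∧ f (i + 1) ≠ (f i).symm) →
      ∃ (v : V) (p : G.Walk v v), p.IsCycle ∧ p.length = k ∧
        (Set.range fun i => (f i).edge) = ↑p.edges.toFinset) ∧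
    tbcCount G k = 2 * k * cycleCount G k := by
  classical
  haveI : NeZero k := ⟨hk.ne'⟩
  constructor
  · intro f hf
    exact TBCAux.tbc_to_cycle hg hk hk2g hf
  · rw [tbcCount, cycleCount]
    set C := {s : Finset (Sym2 V) // ∃ (v : V) (p : G.Walk v v),
      p.IsCycle ∧ p.length = k ∧ p.edges.toFinset = s} with hC
    set T := {f : ZMod k → G.Dart //
      ∀ i, (f i).snd = (f (i + 1)).fst ∧ f (i + 1) ≠ (f i).symm} with hT
    have hΦmem : ∀ t : T, ∃ (v : V) (p : G.Walk v v), p.IsCycle ∧ p.length = k ∧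
        p.edges.toFinset = (Set.range fun i => (t.1 i).edge).toFinset := by
      intro t
      obtain ⟨v, p, hpc, hlen, hr⟩ := TBCAux.tbc_to_cycle hg hk hk2g t.2
      refine ⟨v, p, hpc, hlen, ?_⟩
      ext x
      rw [Set.mem_toFinset, hr]
      simp
    set Φ : T → C := fun t => ⟨(Set.range fun i => (t.1 i).edge).toFinset, hΦmem t⟩ with hΦ
    have hfibcard : ∀ c : C, Nonempty ({t : T // Φ t = c} ≃ ZMod k × Bool) := by
      intro c
      obtain ⟨v, p, hpc, hlen, hs⟩ := c.2
      have h3 : 3 ≤ k := by rw [← hlen]; exact hpc.three_le_length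
      obtain ⟨f₀, hf₀, hr₀⟩ := TBCAux.cycle_to_tbc h3 hpc hlen
      have hrange₀ : (Set.range fun i => (f₀ i).edge) = ↑(c.1 : Finset (Sym2 V)) := by
        rw [hr₀, ← hs]
        ext x
        simp
      obtain ⟨E⟩ := TBCAux.fiber_equiv hg hk hk2g hf₀
      refine ⟨Equiv.trans ?_ E⟩
      refine { toFun := fun t => ⟨t.1.1, t.1.2, ?_⟩, invFun := fun u => ⟨⟨u.1, u.2.1⟩, ?_⟩,
               left_inv := fun t => rfl, right_inv := fun u => rfl }
      · have h1 : (Set.range fun i => (t.1.1 i).edge).toFinset = c.1 := congrArg Subtype.val t.2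
        have h2 : (Set.range fun i => (t.1.1 i).edge) = ↑(c.1 : Finset (Sym2 V)) := by
          rw [← h1, Set.coe_toFinset]
        rw [h2, hrange₀]
      · apply Subtype.ext
        show (Set.range fun i => (u.1 i).edge).toFinset = c.1
        rw [Set.toFinset_congr (u.2.2.trans hrange₀)]
        exact Finset.toFinset_coe _
    calc Nat.card T = Nat.card (Σ c : C, {t : T // Φ t = c}) :=
          Nat.card_congr (Equiv.sigmaFiberEquiv Φ).symm
      _ = Nat.card (C × (ZMod k × Bool)) :=
          Nat.card_congr ((Equiv.sigmaCongrRight fun c => (hfibcard c).some).trans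
            (Equiv.sigmaEquivProd C (ZMod k × Bool)))
      _ = 2 * k * Nat.card C := by
          rw [Nat.card_prod, Nat.card_prod, Nat.card_zmod]
          have : Nat.card Bool = 2 := by simp [Nat.card_eq_fintype_card]
          rw [this]
          ring
end

section
/- Let G be a connected bi-regular bipartite graph with degrees d_v = q_1+1 and d_c = q_2+1, adjacency matrix A, and directed edge matrix A_e. If λ is a nonzero eigenvalue of A, then each root ξ of the quadratic equation ξ² + (−λ² + q_1 + q_2)ξ + q_1 q_2 = 0 is an eigenvalue of A_e². -/
open SimpleGraph Matrix Polynomial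

/-- The directed edge matrix of a graph. -/
def edgeMatrix {V : Type*} [DecidableEq V] (G : SimpleGraph V) [DecidableRel G.Adj]
    (R : Type*) [Zero R] [One R] : Matrix G.Dart G.Dart R :=
  fun e f => if e.snd = f.fst ∧ f ≠ e.symm then 1 else 0

section helpers
open Finset

lemma eig_mem_spectrum {n : Type*} [Fintype n] [DecidableEq n]
    {K : Type*} [Field K] (M : Matrix n n K) (ξ : K) (v : n → K) (hv : v ≠ 0)
    (h : M.mulVec v = ξ • v) : ξ ∈ spectrum K M := by
  rw [spectrum.mem_iff]
  intro hU
  rw [Matrix.isUnit_iff_isUnit_det, isUnit_iff_ne_zero] at hU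
  apply hU
  rw [← Matrix.exists_mulVec_eq_zero_iff]
  refine ⟨v, hv, ?_⟩
  have : (algebraMap K (Matrix n n K)) ξ = ξ • (1 : Matrix n n K) := by
    simp [Algebra.algebraMap_eq_smul_one]
  rw [this, Matrix.sub_mulVec, Matrix.smul_mulVec, Matrix.one_mulVec, h, sub_self]

lemma eig_mem_spectrum_transpose {n : Type*} [Fintype n] [DecidableEq n]
    {K : Type*} [Field K] (M : Matrix n n K) (ξ : K) (v : n → K) (hv : v ≠ 0)
    (h : Mᵀ.mulVec v = ξ • v) : ξ ∈ spectrum K M := by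
  have h1 := eig_mem_spectrum Mᵀ ξ v hv h
  rw [spectrum.mem_iff] at h1 ⊢
  intro hU
  apply h1
  rw [Matrix.isUnit_iff_isUnit_det, isUnit_iff_ne_zero] at hU ⊢
  rw [← Matrix.det_transpose]
  convert hU using 2
  ext i j
  simp [Matrix.transpose_apply, Matrix.algebraMap_matrix_apply]
  aesop

lemma spectrum_mem_exists_eigvec {n : Type*} [Fintype n] [DecidableEq n]
    {K : Type*} [Field K] (M : Matrix n n K) (ξ : K) (h : ξ ∈ spectrum K M) :
    ∃ v : n → K, v ≠ 0 ∧ M.mulVec v = ξ • v := by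
  rw [spectrum.mem_iff] at h
  rw [Matrix.isUnit_iff_isUnit_det, isUnit_iff_ne_zero, not_ne_iff,
    ← Matrix.exists_mulVec_eq_zero_iff] at h
  obtain ⟨v, hv, hMv⟩ := h
  refine ⟨v, hv, ?_⟩
  have ha : (algebraMap K (Matrix n n K)) ξ = ξ • (1 : Matrix n n K) := by
    simp [Algebra.algebraMap_eq_smul_one]
  rw [ha, Matrix.sub_mulVec, Matrix.smul_mulVec, Matrix.one_mulVec] at hMv
  have := sub_eq_zero.mp hMv
  exact this.symm

variable {V : Type*} [Fintype V] [DecidableEq V] {G : SimpleGraph V} [DecidableRel G.Adj]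

lemma sum_darts_fst (v : V) (φ : G.Dart → ℂ) :
    ∑ f : G.Dart, (if f.fst = v then φ f else 0)
      = ∑ x ∈ G.neighborFinset v, if h : G.Adj v x then φ ⟨(v,x), h⟩ else 0 := by
  rw [← Finset.sum_filter]
  refine Finset.sum_bij' (fun f _ => f.snd) (fun x hx => ⟨(v, x), by simpa using hx⟩)
    ?_ ?_ ?_ ?_ ?_
  · intro f hf
    simp only [mem_filter, mem_univ, true_and] at hf
    simp [← hf, f.adj]
  · intro x hx; simp
  · intro f hf
    simp only [mem_filter, mem_univ, true_and] at hf
    ext <;> simp [hf]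
  · intro x hx; simp
  · intro f hf
    simp only [mem_filter, mem_univ, true_and] at hf
    have : G.Adj v f.snd := hf ▸ f.adj
    rw [dif_pos this]
    congr 1
    ext <;> simp [hf]

lemma edgeMatrix_mulVec (z : G.Dart → ℂ) (e : G.Dart) :
    ((edgeMatrix G ℂ).mulVec z) e
      = (∑ f : G.Dart, if f.fst = e.snd then z f else 0) - z e.symm := by
  rw [Matrix.mulVec]
  have key : ∀ f : G.Dart, (edgeMatrix G ℂ) e f * z f
      = (if f.fst = e.snd then z f else 0) - (if f = e.symm then z f else 0) := by
    intro f
    by_cases h1 : f.fst = e.snd <;> by_cases h2 : f = e.symm <;>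
      simp [edgeMatrix, h1, h2, eq_comm]
  calc dotProduct (fun f => edgeMatrix G ℂ e f) z
      = ∑ f : G.Dart, ((if f.fst = e.snd then z f else 0) - (if f = e.symm then z f else 0)) := by
        apply Finset.sum_congr rfl; intro f _; exact key f
    _ = _ := by
        rw [Finset.sum_sub_distrib]
        congr 1
        simp

lemma edgeMatrix_transpose_mulVec (z : G.Dart → ℂ) (e : G.Dart) :
    (((edgeMatrix G ℂ)ᵀ).mulVec z) e
      = (∑ f : G.Dart, if f.snd = e.fst then z f else 0) - z e.symm := by
  rw [Matrix.mulVec]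
  have key : ∀ f : G.Dart, ((edgeMatrix G ℂ)ᵀ) e f * z f
      = (if f.snd = e.fst then z f else 0) - (if f = e.symm then z f else 0) := by
    intro f
    have hne : (e ≠ f.symm) ↔ (f ≠ e.symm) := by
      constructor
      · intro h hf; apply h; rw [hf, Dart.symm_symm]
      · intro h hf; apply h; rw [hf, Dart.symm_symm]
    by_cases h1 : f.snd = e.fst <;> by_cases h2 : f = e.symm <;>
      simp [edgeMatrix, Matrix.transpose_apply, h1, h2, hne, eq_comm]
  calc dotProduct (fun f => (edgeMatrix G ℂ)ᵀ e f) z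
      = ∑ f : G.Dart, ((if f.snd = e.fst then z f else 0) - (if f = e.symm then z f else 0)) := by
        apply Finset.sum_congr rfl; intro f _; exact key f
    _ = _ := by
        rw [Finset.sum_sub_distrib]
        congr 1
        simp

omit [Fintype V] [DecidableRel G.Adj] in
lemma walk_dart_sum {a b : V} (p : G.Walk a b) (v : V) :
    ((p.darts.map (fun f => if f.fst = v then (1:ℂ) else 0)).sum
      - (p.darts.map (fun f => if f.snd = v then (1:ℂ) else 0)).sum)
      = (if a = v then 1 else 0) - (if b = v then 1 else 0) := by
  induction p with
  | nil => simp
  | cons h q ih =>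
      rw [Walk.darts_cons]
      simp only [List.map_cons, List.sum_cons]
      rw [show ∀ x y zz ww : ℂ, (x + y) - (zz + ww) = (x - zz) + (y - ww) by intros; ring]
      rw [ih]
      ring

lemma sum_ind_list (D : List G.Dart) (hD : D.Nodup) (φ : G.Dart → Prop)
    [DecidablePred φ] :
    ∑ f : G.Dart, (if φ f then (if f ∈ D then (1:ℂ) else 0) else 0)
      = (D.map (fun f => if φ f then (1:ℂ) else 0)).sum := by
  rw [← List.sum_toFinset _ hD]
  have step : ∀ f : G.Dart, (if φ f then (if f ∈ D then (1:ℂ) else 0) else 0)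
      = if f ∈ D.toFinset then (if φ f then (1:ℂ) else 0) else 0 := by
    intro f
    by_cases h : φ f <;> by_cases h2 : f ∈ D <;> simp [h, h2]
  rw [Finset.sum_congr rfl (fun f _ => step f), Finset.sum_ite_mem, Finset.univ_inter]

lemma sum_symm_reindex (φ : G.Dart → ℂ) :
    ∑ f : G.Dart, φ f = ∑ f : G.Dart, φ f.symm :=
  (Fintype.sum_equiv (Dart.symm_involutive (G := G)).toPerm _ _ (fun f => by
    simp [Function.Involutive.toPerm])).symm

section circ
variable {x : V} (c : G.Walk x x)

noncomputable def circ : G.Dart → ℂ :=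
  fun e => (if e ∈ c.darts then (1:ℂ) else 0) - (if e.symm ∈ c.darts then (1:ℂ) else 0)

lemma circ_symm (e : G.Dart) : circ c e.symm = - circ c e := by
  simp only [circ, Dart.symm_symm]; ring

lemma circ_fst_sum (hD : c.darts.Nodup) (v : V) :
    ∑ f : G.Dart, (if f.fst = v then circ c f else 0) = 0 := by
  have h1 : ∑ f : G.Dart, (if f.fst = v then circ c f else 0)
      = (∑ f : G.Dart, if f.fst = v then (if f ∈ c.darts then (1:ℂ) else 0) else 0)
        - (∑ f : G.Dart, if f.fst = v then (if f.symm ∈ c.darts then (1:ℂ) else 0) else 0) := by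
    rw [← Finset.sum_sub_distrib]
    apply Finset.sum_congr rfl
    intro f _
    by_cases h : f.fst = v <;> simp [circ, h]
  have h2 : (∑ f : G.Dart, if f.fst = v then (if f.symm ∈ c.darts then (1:ℂ) else 0) else 0)
      = ∑ f : G.Dart, if f.snd = v then (if f ∈ c.darts then (1:ℂ) else 0) else 0 := by
    rw [sum_symm_reindex
      (fun f => if f.fst = v then (if f.symm ∈ c.darts then (1:ℂ) else 0) else 0)]
    apply Finset.sum_congr rfl
    intro f _
    simp [Dart.symm_symm]
  rw [h1, h2, sum_ind_list _ hD _, sum_ind_list _ hD _, walk_dart_sum c v]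
  ring

lemma circ_snd_sum (hD : c.darts.Nodup) (v : V) :
    ∑ f : G.Dart, (if f.snd = v then circ c f else 0) = 0 := by
  have := circ_fst_sum c hD v
  rw [sum_symm_reindex (fun f => if f.snd = v then circ c f else 0)]
  have h2 : ∀ f : G.Dart, (if f.symm.snd = v then circ c f.symm else 0)
      = - (if f.fst = v then circ c f else 0) := by
    intro f
    by_cases h : f.fst = v <;> simp [h, circ_symm]
  rw [Finset.sum_congr rfl (fun f _ => h2 f), Finset.sum_neg_distrib, this, neg_zero]

end circ

omit [Fintype V] [DecidableRel G.Adj] in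
lemma dart_symm_fst (e : G.Dart) : e.symm.fst = e.snd := rfl

omit [Fintype V] [DecidableRel G.Adj] in
lemma dart_symm_snd (e : G.Dart) : e.symm.snd = e.fst := rfl

lemma sum_darts_fst' (v : V) (φ : G.Dart → ℂ) (ψ : V → ℂ)
    (hψ : ∀ (x : V) (h : G.Adj v x), φ ⟨(v,x),h⟩ = ψ x) :
    ∑ f : G.Dart, (if f.fst = v then φ f else 0) = ∑ x ∈ G.neighborFinset v, ψ x := by
  rw [sum_darts_fst]
  refine Finset.sum_congr rfl (fun x hx => ?_)
  rw [SimpleGraph.mem_neighborFinset] at hx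
  rw [dif_pos hx, hψ]
end helpers


/-- For a connected bi-regular bipartite graph with degrees `q₁+1` and `q₂+1`, if `λ` is
a nonzero eigenvalue of the adjacency matrix, then each root `ξ` of
`ξ² + (-λ² + q₁ + q₂)ξ + q₁q₂ = 0` is an eigenvalue of the square of the directed edge
matrix. -/
theorem roots_of_quadratic_are_eigenvalues_of_edgeMatrix_sq {U W : Type*}
    [Fintype U] [Fintype W] [DecidableEq U] [DecidableEq W]
    (G : SimpleGraph (U ⊕ W)) [DecidableRel G.Adj]
    (hbipL : ∀ u u' : U, ¬ G.Adj (Sum.inl u) (Sum.inl u'))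
    (hbipR : ∀ w w' : W, ¬ G.Adj (Sum.inr w) (Sum.inr w'))
    (hconn : G.Connected) (q₁ q₂ : ℕ) (hq₁ : 1 ≤ q₁) (hq₂ : 2 ≤ q₂)
    (hdegU : ∀ u : U, G.degree (Sum.inl u) = q₁ + 1)
    (hdegW : ∀ w : W, G.degree (Sum.inr w) = q₂ + 1)
    (lam : ℝ) (hlam : lam ≠ 0) (hlamspec : lam ∈ spectrum ℝ (G.adjMatrix ℝ))
    (ξ : ℂ) (hξ : ξ ^ 2 + (-(lam : ℂ) ^ 2 + q₁ + q₂) * ξ + q₁ * q₂ = 0) :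
    ξ ∈ spectrum ℂ ((edgeMatrix G ℂ) ^ 2) := by
  by_cases hone : ξ = 1
  · -- circulation case
    subst hone
    -- G has a cycle
    have hcyc : ¬ G.IsAcyclic := by
      intro hacyc
      have htree : G.IsTree := ⟨hconn, hacyc⟩
      have hcard := htree.card_edgeFinset
      have hsum := G.sum_degrees_eq_twice_card_edges
      rw [Fintype.sum_sum_type] at hsum
      simp only [hdegU, hdegW, Finset.sum_const, Finset.card_univ, smul_eq_mul] at hsum
      rw [Fintype.card_sum] at hcard
      have h1 : Fintype.card U * 2 ≤ Fintype.card U * (q₁ + 1) :=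
        Nat.mul_le_mul_left _ (by omega)
      have h2 : Fintype.card W * 3 ≤ Fintype.card W * (q₂ + 1) :=
        Nat.mul_le_mul_left _ (by omega)
      omega
    simp only [SimpleGraph.IsAcyclic] at hcyc
    push_neg at hcyc
    obtain ⟨v₀, c, hc⟩ := hcyc
    have hedges : (c.darts.map SimpleGraph.Dart.edge).Nodup := hc.isCircuit.isTrail.edges_nodup
    have hD : c.darts.Nodup := List.Nodup.of_map _ hedges
    obtain ⟨e₀, he₀⟩ := List.exists_mem_of_ne_nil c.darts (by
      intro h
      apply hc.isCircuit.ne_nil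
      cases c with
      | nil => rfl
      | cons h' p => simp [SimpleGraph.Walk.darts_cons] at h)
    have hsymm_notmem : e₀.symm ∉ c.darts := by
      intro hmem
      have := List.inj_on_of_nodup_map hedges he₀ hmem (Dart.edge_symm e₀).symm
      exact Dart.symm_ne e₀ this.symm
    have hnz : circ c ≠ 0 := by
      intro h
      have h1 : circ c e₀ = 0 := by rw [h]; rfl
      rw [circ, if_pos he₀, if_neg hsymm_notmem, sub_zero] at h1
      exact one_ne_zero h1
    have key : ((edgeMatrix G ℂ)ᵀ).mulVec (circ c) = circ c := by
      funext e
      rw [edgeMatrix_transpose_mulVec, circ_snd_sum c hD, circ_symm, zero_sub, neg_neg]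
    apply eig_mem_spectrum_transpose ((edgeMatrix G ℂ)^2) 1 (circ c) hnz
    rw [Matrix.transpose_pow, pow_two, ← Matrix.mulVec_mulVec, key, key, one_smul]
  · -- generic case
    obtain ⟨f, hf0, hfeig⟩ := spectrum_mem_exists_eigvec _ _ hlamspec
    set lc : ℂ := (lam : ℂ) with hlc
    have hlc0 : lc ≠ 0 := Complex.ofReal_ne_zero.mpr hlam
    set F : U ⊕ W → ℂ := fun v => ((f v : ℝ) : ℂ) with hFdef
    have hFeig : ∀ v, ∑ x ∈ G.neighborFinset v, F x = lc * F v := by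
      intro v
      have h1 := congrFun hfeig v
      rw [SimpleGraph.adjMatrix_mulVec_apply] at h1
      have h2 : ((∑ x ∈ G.neighborFinset v, f x : ℝ) : ℂ) = ((lam * f v : ℝ) : ℂ) := by
        rw [h1]; norm_num
      push_cast at h2
      simpa [hFdef] using h2
    set t : ℂ := (q₁ : ℂ) + ξ with ht
    set g : G.Dart → ℂ :=
      fun e => if e.fst.isLeft then -lc * F e.fst + t * F e.snd else 0 with hg
    have hopp : ∀ a b : U ⊕ W, G.Adj a b → (a.isLeft = !b.isLeft) := by
      rintro (u|w) (u'|w') h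
      · exact absurd h (hbipL u u')
      · rfl
      · rfl
      · exact absurd h (hbipR w w')
    -- first application
    have hg1 : ∀ e : G.Dart, ((edgeMatrix G ℂ).mulVec g) e
        = if e.snd.isLeft then -t * F e.fst + (lc*t - (q₁:ℂ)*lc) * F e.snd else 0 := by
      intro e
      rw [edgeMatrix_mulVec]
      by_cases hL : e.snd.isLeft
      · obtain ⟨u, hu⟩ : ∃ u, e.snd = Sum.inl u := by
          rcases hsnd : e.snd with u | w
          · exact ⟨u, rfl⟩
          · rw [hsnd] at hL; simp at hL
        rw [sum_darts_fst' e.snd g (fun x => -lc * F e.snd + t * F x)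
          (fun x h => by simp only [hg]; rw [if_pos hL])]
        rw [Finset.sum_add_distrib, Finset.sum_const, SimpleGraph.card_neighborFinset_eq_degree,
          ← Finset.mul_sum, hFeig, hu, hdegU u, if_pos (hu ▸ hL)]
        have hsymm : g e.symm = -lc * F e.snd + t * F e.fst := by
          simp only [hg, dart_symm_fst, dart_symm_snd]; exact if_pos hL
        rw [hsymm, ← hu]
        push_cast
        ring
      · rw [sum_darts_fst' e.snd g (fun _ => 0)
          (fun x h => by simp only [hg]; rw [if_neg hL]), Finset.sum_const_zero]
        have hsymm : g e.symm = 0 := by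
          simp only [hg, dart_symm_fst]; exact if_neg hL
        rw [hsymm, if_neg hL, sub_zero]
    -- second application
    have hg2 : (edgeMatrix G ℂ).mulVec ((edgeMatrix G ℂ).mulVec g) = ξ • g := by
      funext e
      rw [edgeMatrix_mulVec]
      by_cases hL : e.snd.isLeft
      · have hfstR : ¬ (e.fst.isLeft = true) := by
          rw [hopp e.fst e.snd e.adj, hL]; simp
        rw [sum_darts_fst' e.snd _ (fun _ => 0) (fun x h => by
          rw [hg1]
          have hx : ¬ ((⟨(e.snd, x), h⟩ : G.Dart).snd.isLeft = true) := by
            show ¬ (x.isLeft = true)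
            rw [hopp x e.snd h.symm]; simp [hL]
          rw [if_neg hx]), Finset.sum_const_zero]
        have hsymm : ((edgeMatrix G ℂ).mulVec g) e.symm = 0 := by
          rw [hg1]
          have : ¬ (e.symm.snd.isLeft = true) := by rw [dart_symm_snd]; exact hfstR
          rw [if_neg this]
        rw [hsymm, sub_zero]
        simp only [Pi.smul_apply, hg, smul_eq_mul]
        rw [if_neg hfstR, mul_zero]
      · obtain ⟨w, hw⟩ : ∃ w, e.snd = Sum.inr w := by
          rcases hsnd : e.snd with u | w
          · rw [hsnd] at hL; simp at hL
          · exact ⟨w, rfl⟩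
        have hfstL : e.fst.isLeft = true := by
          rw [hopp e.fst e.snd e.adj, hw]; rfl
        rw [sum_darts_fst' e.snd _ (fun x => -t * F e.snd + (lc*t - (q₁:ℂ)*lc) * F x)
          (fun x h => by
            rw [hg1]
            have hx : (⟨(e.snd, x), h⟩ : G.Dart).snd.isLeft = true := by
              show x.isLeft = true
              rw [hopp x e.snd h.symm, hw]; rfl
            rw [if_pos hx])]
        rw [Finset.sum_add_distrib, Finset.sum_const, SimpleGraph.card_neighborFinset_eq_degree,
          ← Finset.mul_sum, hFeig, hw, hdegW w]
        have hsymm : ((edgeMatrix G ℂ).mulVec g) e.symm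
            = -t * F e.snd + (lc*t - (q₁:ℂ)*lc) * F e.fst := by
          rw [hg1]
          have : e.symm.snd.isLeft = true := by rw [dart_symm_snd]; exact hfstL
          rw [if_pos this, dart_symm_fst, dart_symm_snd]
        rw [hsymm, ← hw]
        simp only [Pi.smul_apply, hg, smul_eq_mul]
        rw [if_pos hfstL]
        push_cast
        simp only [ht]
        linear_combination (-(F e.snd)) * hξ
    -- nonvanishing
    have hgnz : g ≠ 0 := by
      intro h0
      have hz : ∀ (a b : U ⊕ W) (hab : G.Adj a b), a.isLeft = true → lc * F a = t * F b := by
        intro a b hab ha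
        have h1 := congrFun h0 (⟨(a,b),hab⟩ : G.Dart)
        simp only [hg, Pi.zero_apply] at h1
        rw [if_pos ha] at h1
        linear_combination -h1
      have hFL : ∀ u : U, F (Sum.inl u) = 0 := by
        intro u
        have hsum := hFeig (Sum.inl u)
        have h4 : t * ∑ x ∈ G.neighborFinset (Sum.inl u), F x
            = ((q₁:ℂ)+1) * (lc * F (Sum.inl u)) := by
          rw [Finset.mul_sum]
          have hcong : ∀ x ∈ G.neighborFinset (Sum.inl u), t * F x = lc * F (Sum.inl u) := by
            intro x hx
            rw [SimpleGraph.mem_neighborFinset] at hx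
            exact (hz _ x hx rfl).symm
          rw [Finset.sum_congr rfl hcong, Finset.sum_const,
            SimpleGraph.card_neighborFinset_eq_degree, hdegU, nsmul_eq_mul]
          push_cast
          ring
        rw [hsum] at h4
        have hkey : lc * F (Sum.inl u) * (t - ((q₁:ℂ)+1)) = 0 := by
          linear_combination h4
        have hne1 : t - ((q₁:ℂ)+1) ≠ 0 := by
          simp only [ht]
          intro h
          apply hone
          linear_combination h
        have h5 := (mul_eq_zero.mp hkey).resolve_right hne1
        exact (mul_eq_zero.mp h5).resolve_left hlc0
      have hFR : ∀ w : W, F (Sum.inr w) = 0 := by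
        intro w
        have hsum := hFeig (Sum.inr w)
        have heach : ∀ x ∈ G.neighborFinset (Sum.inr w), F x = 0 := by
          intro x hx
          rw [SimpleGraph.mem_neighborFinset] at hx
          rcases hx' : x with u | w'
          · exact hFL u
          · rw [hx'] at hx; exact absurd hx (hbipR w w')
        rw [Finset.sum_congr rfl heach, Finset.sum_const_zero] at hsum
        have := hsum.symm
        exact (mul_eq_zero.mp this).resolve_left hlc0
      apply hf0
      funext v
      have hFv : F v = 0 := by
        rcases v with u | w
        · exact hFL u
        · exact hFR w
      simp only [hFdef] at hFv
      show f v = 0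
      exact_mod_cast hFv
    apply eig_mem_spectrum ((edgeMatrix G ℂ)^2) ξ g hgnz
    rw [pow_two, ← Matrix.mulVec_mulVec, hg2]
end

section
/- Let A_e be the directed edge matrix of a (q+1)-regular bipartite graph (q_1 = q_2 = q). Then the eigenvalues of A_e all lie in the set {±1} ∪ {±√(−q)} ∪ {±√ξ : ξ² + (q_1+q_2−λ²)ξ + q_1q_2 = 0 for some adjacency eigenvalue λ}; in particular every eigenvalue η of A_e satisfies |η| ≤ q. -/
open SimpleGraph Matrix Polynomial

section Helpers

variable {V : Type*} [Fintype V] [DecidableEq V] (G : SimpleGraph V) [DecidableRel G.Adj]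

lemma edgeMatrix_mulVec_apply' (v : G.Dart → ℂ) (e : G.Dart) :
    (edgeMatrix G ℂ *ᵥ v) e
      = (∑ d ∈ Finset.univ.filter (fun d : G.Dart => d.fst = e.snd), v d) - v e.symm := by
  classical
  have hset : Finset.univ.filter (fun f : G.Dart => e.snd = f.fst ∧ f ≠ e.symm)
      = (Finset.univ.filter (fun f : G.Dart => f.fst = e.snd)).erase e.symm := by
    ext f
    simp only [Finset.mem_filter, Finset.mem_univ, true_and, Finset.mem_erase]
    constructor
    · rintro ⟨h1, h2⟩; exact ⟨h2, h1.symm⟩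
    · rintro ⟨h1, h2⟩; exact ⟨h2.symm, h1⟩
  have hmem : e.symm ∈ Finset.univ.filter (fun f : G.Dart => f.fst = e.snd) := by
    simp only [Finset.mem_filter, Finset.mem_univ, true_and]; rfl
  calc (edgeMatrix G ℂ *ᵥ v) e
      = ∑ f ∈ Finset.univ.filter (fun f : G.Dart => e.snd = f.fst ∧ f ≠ e.symm), v f := by
        simp [Matrix.mulVec, dotProduct, edgeMatrix, ite_mul, one_mul, zero_mul,
          Finset.sum_filter]
    _ = ∑ f ∈ (Finset.univ.filter (fun f : G.Dart => f.fst = e.snd)).erase e.symm, v f := by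
        rw [hset]
    _ = _ := by
        rw [eq_sub_iff_add_eq, Finset.sum_erase_add _ _ hmem]

lemma sum_dart_fst_eq_neighbor (x : V) (F : V → ℂ) :
    ∑ d ∈ Finset.univ.filter (fun d : G.Dart => d.fst = x), F d.snd
      = ∑ y ∈ G.neighborFinset x, F y := by
  refine Finset.sum_bij' (fun d _ => d.snd) (fun y hy => SimpleGraph.Dart.mk (x, y)
    ((G.mem_neighborFinset x y).mp hy)) ?_ ?_ ?_ ?_ ?_
  · intro d hd; simp only [Finset.mem_filter, Finset.mem_univ, true_and] at hd
    show d.snd ∈ G.neighborFinset x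
    rw [SimpleGraph.mem_neighborFinset, ← hd]; exact d.adj
  · intro y hy; simp
  · intro d hd; simp only [Finset.mem_filter, Finset.mem_univ, true_and] at hd
    exact SimpleGraph.Dart.ext _ _ (Prod.ext hd.symm rfl)
  · intro y hy; rfl
  · intro d hd; rfl

lemma sum_dart_snd_symm (x : V) (F : G.Dart → ℂ) :
    ∑ d ∈ Finset.univ.filter (fun d : G.Dart => d.snd = x), F d
      = ∑ d ∈ Finset.univ.filter (fun d : G.Dart => d.fst = x), F d.symm := by
  refine Finset.sum_bij' (fun d _ => d.symm) (fun d _ => d.symm) ?_ ?_ ?_ ?_ ?_ <;>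
    intro d hd <;>
    first
      | (simp only [Finset.mem_filter, Finset.mem_univ, true_and] at hd ⊢; exact hd)
      | simp

/-- An eigenvalue (over `ℂ`) of the complexified adjacency matrix is real, and its real
part is a real eigenvalue of the real adjacency matrix. -/
lemma adj_eigenvalue_real_mem (μ : ℂ) (f : V → ℂ) (hf : f ≠ 0)
    (hAf : ∀ x, (G.adjMatrix ℂ *ᵥ f) x = μ * f x) :
    μ.im = 0 ∧ μ.re ∈ spectrum ℝ (G.adjMatrix ℝ) := by
  classical
  obtain ⟨x0, hx0⟩ := Function.ne_iff.mp hf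
  have hx0' : f x0 ≠ 0 := hx0
  set c : ℝ := ∑ x, Complex.normSq (f x) with hc
  have hcpos : 0 < c :=
    Finset.sum_pos' (fun i _ => Complex.normSq_nonneg _)
      ⟨x0, Finset.mem_univ _, Complex.normSq_pos.mpr hx0'⟩
  have hAc : ∀ x y : V, (starRingEnd ℂ) (G.adjMatrix ℂ x y) = G.adjMatrix ℂ x y := by
    intro x y
    by_cases h : G.Adj x y <;> simp [SimpleGraph.adjMatrix_apply, h]
  have hAsymm : ∀ x y : V, G.adjMatrix ℂ x y = G.adjMatrix ℂ y x := by
    intro x y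
    simp only [SimpleGraph.adjMatrix_apply, G.adj_comm]
  have hs1 : ∑ x, (starRingEnd ℂ) (f x) * (G.adjMatrix ℂ *ᵥ f) x = μ * c := by
    have key : ∀ x, (starRingEnd ℂ) (f x) * (G.adjMatrix ℂ *ᵥ f) x
        = μ * ((Complex.normSq (f x) : ℝ) : ℂ) := by
      intro x
      rw [hAf x, ← Complex.mul_conj (f x)]
      ring
    rw [Finset.sum_congr rfl (fun x _ => key x), ← Finset.mul_sum, hc]
    push_cast
    norm_num
  have hs2 : (starRingEnd ℂ) (∑ x, (starRingEnd ℂ) (f x) * (G.adjMatrix ℂ *ᵥ f) x)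
      = ∑ x, (starRingEnd ℂ) (f x) * (G.adjMatrix ℂ *ᵥ f) x := by
    calc (starRingEnd ℂ) (∑ x, (starRingEnd ℂ) (f x) * (G.adjMatrix ℂ *ᵥ f) x)
        = ∑ x, ∑ y, f x * (G.adjMatrix ℂ x y * (starRingEnd ℂ) (f y)) := by
          rw [map_sum]
          refine Finset.sum_congr rfl fun x _ => ?_
          rw [Matrix.mulVec, dotProduct, Finset.mul_sum, map_sum]
          refine Finset.sum_congr rfl fun y _ => ?_
          simp only [_root_.map_mul, Complex.conj_conj, hAc]
      _ = ∑ x, ∑ y, (starRingEnd ℂ) (f x) * (G.adjMatrix ℂ x y * f y) := by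
          rw [Finset.sum_comm]
          refine Finset.sum_congr rfl fun x _ => Finset.sum_congr rfl fun y _ => ?_
          rw [hAsymm y x]
          ring
      _ = ∑ x, (starRingEnd ℂ) (f x) * (G.adjMatrix ℂ *ᵥ f) x := by
          refine Finset.sum_congr rfl fun x _ => ?_
          rw [Matrix.mulVec, dotProduct, Finset.mul_sum]
  have hμconj : (starRingEnd ℂ) μ = μ := by
    have h1 := congrArg (starRingEnd ℂ) hs1
    rw [hs2, _root_.map_mul, Complex.conj_ofReal, hs1] at h1
    have hc0 : ((c : ℝ) : ℂ) ≠ 0 := by exact_mod_cast hcpos.ne'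
    exact (mul_right_cancel₀ hc0 h1).symm
  have him : μ.im = 0 := Complex.conj_eq_iff_im.mp hμconj
  have hμre : ((μ.re : ℝ) : ℂ) = μ := Complex.conj_eq_iff_re.mp hμconj
  refine ⟨him, ?_⟩
  have hker : (((μ.re : ℝ) : ℂ) • (1 : Matrix V V ℂ) - G.adjMatrix ℂ) *ᵥ f = 0 := by
    rw [Matrix.sub_mulVec, Matrix.smul_mulVec, Matrix.one_mulVec]
    funext x
    simp only [Pi.sub_apply, Pi.smul_apply, smul_eq_mul, Pi.zero_apply, hAf x, hμre]
    ring
  have hdetC : ((((μ.re : ℝ) : ℂ)) • (1 : Matrix V V ℂ) - G.adjMatrix ℂ).det = 0 :=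
    Matrix.exists_mulVec_eq_zero_iff.mp ⟨f, hf, hker⟩
  have hmap : ((μ.re • (1 : Matrix V V ℝ) - G.adjMatrix ℝ).map (algebraMap ℝ ℂ))
      = (((μ.re : ℝ) : ℂ) • (1 : Matrix V V ℂ) - G.adjMatrix ℂ) := by
    ext x y
    simp only [Matrix.map_apply, Matrix.sub_apply, Matrix.smul_apply, Matrix.one_apply,
      SimpleGraph.adjMatrix_apply, smul_eq_mul]
    split_ifs <;> push_cast <;> first | rfl | ring
  have hdetR : (μ.re • (1 : Matrix V V ℝ) - G.adjMatrix ℝ).det = 0 := by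
    have h := RingHom.map_det (algebraMap ℝ ℂ) (μ.re • (1 : Matrix V V ℝ) - G.adjMatrix ℝ)
    rw [RingHom.mapMatrix_apply, hmap, hdetC, Complex.coe_algebraMap] at h
    exact_mod_cast h
  rw [spectrum.mem_iff, Algebra.algebraMap_eq_smul_one]
  intro h
  rw [Matrix.isUnit_iff_isUnit_det, hdetR] at h
  exact not_isUnit_zero h

/-- An eigenvalue of the complexified adjacency matrix of a `k`-regular graph has
modulus at most `k`. -/
lemma adj_eigenvalue_abs_le (k : ℕ) (hdeg : ∀ x, G.degree x = k) (μ : ℂ) (f : V → ℂ)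
    (hf : f ≠ 0) (hAf : ∀ x, (G.adjMatrix ℂ *ᵥ f) x = μ * f x) :
    ‖μ‖ ≤ k := by
  classical
  obtain ⟨x0, hx0⟩ := Function.ne_iff.mp hf
  have hx0' : f x0 ≠ 0 := hx0
  obtain ⟨x1, -, hx1⟩ := Finset.exists_max_image Finset.univ (fun x => ‖f x‖)
    ⟨x0, Finset.mem_univ _⟩
  have hfx1 : 0 < ‖f x1‖ :=
    lt_of_lt_of_le (by simpa using hx0' : 0 < ‖f x0‖) (hx1 x0 (Finset.mem_univ _))
  have hchain : ‖μ‖ * ‖f x1‖ ≤ (k : ℝ) * ‖f x1‖ := by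
    calc ‖μ‖ * ‖f x1‖ = ‖μ * f x1‖ := (norm_mul _ _).symm
      _ = ‖(G.adjMatrix ℂ *ᵥ f) x1‖ := by rw [hAf x1]
      _ = ‖∑ y ∈ G.neighborFinset x1, f y‖ := by
          rw [SimpleGraph.adjMatrix_mulVec_apply]
      _ ≤ ∑ y ∈ G.neighborFinset x1, ‖f y‖ :=
          norm_sum_le _ _
      _ ≤ ∑ _y ∈ G.neighborFinset x1, ‖f x1‖ :=
          Finset.sum_le_sum fun y _ => hx1 y (Finset.mem_univ _)
      _ = (k : ℝ) * ‖f x1‖ := by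
          rw [Finset.sum_const, nsmul_eq_mul, SimpleGraph.card_neighborFinset_eq_degree,
            hdeg x1]
  exact le_of_mul_le_mul_right hchain hfx1

end Helpers

/-- For a `(q+1)`-regular bipartite graph, every eigenvalue of the directed edge matrix
lies in `{±1} ∪ {±√(-q)} ∪ {±√ξ : ξ² + (2q - λ²)ξ + q² = 0, λ an adjacency eigenvalue}`;
in particular every eigenvalue `η` satisfies `|η| ≤ q`. -/
theorem eigenvalues_edgeMatrix_regular_bipartite {U W : Type*}
    [Fintype U] [Fintype W] [DecidableEq U] [DecidableEq W]
    (G : SimpleGraph (U ⊕ W)) [DecidableRel G.Adj]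
    (hbipL : ∀ u u' : U, ¬ G.Adj (Sum.inl u) (Sum.inl u'))
    (hbipR : ∀ w w' : W, ¬ G.Adj (Sum.inr w) (Sum.inr w'))
    (hconn : G.Connected) (q : ℕ) (hq : 1 ≤ q)
    (hdegU : ∀ u : U, G.degree (Sum.inl u) = q + 1)
    (hdegW : ∀ w : W, G.degree (Sum.inr w) = q + 1) :
    ∀ η : ℂ, η ∈ spectrum ℂ (edgeMatrix G ℂ) →
      ((η = 1 ∨ η = -1) ∨ η ^ 2 = -(q : ℂ) ∨
        (∃ lam ∈ spectrum ℝ (G.adjMatrix ℝ),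
          (η ^ 2) ^ 2 + ((q : ℂ) + q - (lam : ℂ) ^ 2) * η ^ 2 + (q : ℂ) * q = 0)) ∧
      ‖η‖ ≤ q := by
  classical
  intro η hη
  have hdeg : ∀ x : U ⊕ W, G.degree x = q + 1 := by
    rintro (u | w)
    exacts [hdegU u, hdegW w]
  have hq1 : (1 : ℝ) ≤ (q : ℝ) := by exact_mod_cast hq
  have hqC : ((q : ℂ)) ≠ 0 := by
    exact_mod_cast Nat.cast_ne_zero.mpr (by omega)
  -- extract an eigenvector
  have hdet : (η • (1 : Matrix G.Dart G.Dart ℂ) - edgeMatrix G ℂ).det = 0 := by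
    rw [spectrum.mem_iff] at hη
    by_contra h
    exact hη (by
      rw [Algebra.algebraMap_eq_smul_one]
      exact (Matrix.isUnit_iff_isUnit_det _).mpr (isUnit_iff_ne_zero.mpr h))
  obtain ⟨v, hv0, hv⟩ := Matrix.exists_mulVec_eq_zero_iff.mpr hdet
  have hMv' : edgeMatrix G ℂ *ᵥ v = η • v := by
    rw [Matrix.sub_mulVec, Matrix.smul_mulVec, Matrix.one_mulVec, sub_eq_zero] at hv
    exact hv.symm
  set fv : U ⊕ W → ℂ :=
    fun x => ∑ d ∈ Finset.univ.filter (fun d : G.Dart => d.fst = x), v d with hfvdef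
  set gv : U ⊕ W → ℂ :=
    fun x => ∑ d ∈ Finset.univ.filter (fun d : G.Dart => d.snd = x), v d with hgvdef
  have hstar : ∀ e : G.Dart, η * v e = fv e.snd - v e.symm := by
    intro e
    have h1 := congrFun hMv' e
    rw [edgeMatrix_mulVec_apply'] at h1
    simpa [hfvdef] using h1.symm
  have h1 : ∀ x, η * fv x = (G.adjMatrix ℂ *ᵥ fv) x - gv x := by
    intro x
    have e1 : η * fv x
        = ∑ d ∈ Finset.univ.filter (fun d : G.Dart => d.fst = x), (fv d.snd - v d.symm) := by
      rw [hfvdef, Finset.mul_sum]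
      exact Finset.sum_congr rfl fun d _ => hstar d
    rw [e1, Finset.sum_sub_distrib]
    congr 1
    · rw [sum_dart_fst_eq_neighbor G x fv, SimpleGraph.adjMatrix_mulVec_apply]
    · exact (sum_dart_snd_symm G x v).symm
  have h2 : ∀ x, η * gv x = (q : ℂ) * fv x := by
    intro x
    have e1 : η * gv x
        = ∑ d ∈ Finset.univ.filter (fun d : G.Dart => d.snd = x), (fv d.snd - v d.symm) := by
      rw [hgvdef, Finset.mul_sum]
      exact Finset.sum_congr rfl fun d _ => hstar d
    have e2 : ∑ d ∈ Finset.univ.filter (fun d : G.Dart => d.snd = x), fv d.snd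
        = ((q + 1 : ℕ) : ℂ) * fv x := by
      calc ∑ d ∈ Finset.univ.filter (fun d : G.Dart => d.snd = x), fv d.snd
          = ∑ d ∈ Finset.univ.filter (fun d : G.Dart => d.snd = x), fv x :=
            Finset.sum_congr rfl fun d hd => by
              rw [(Finset.mem_filter.mp hd).2]
        _ = ∑ d ∈ Finset.univ.filter (fun d : G.Dart => d.fst = x), fv x :=
            sum_dart_snd_symm G x (fun _ => fv x)
        _ = ((q + 1 : ℕ) : ℂ) * fv x := by
            rw [Finset.sum_const, nsmul_eq_mul, G.dart_fst_fiber_card_eq_degree x, hdeg x]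
    have e3 : ∑ d ∈ Finset.univ.filter (fun d : G.Dart => d.snd = x), v d.symm = fv x := by
      rw [sum_dart_snd_symm G x (fun d => v d.symm)]
      simp [hfvdef]
    rw [e1, Finset.sum_sub_distrib, e2, e3]
    push_cast
    ring
  have hkey : ∀ x, η * (G.adjMatrix ℂ *ᵥ fv) x = (η ^ 2 + (q : ℂ)) * fv x := by
    intro x
    have hx : (G.adjMatrix ℂ *ᵥ fv) x = η * fv x + gv x := by
      have := h1 x
      linear_combination -this
    calc η * (G.adjMatrix ℂ *ᵥ fv) x = η * (η * fv x + gv x) := by rw [hx]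
      _ = η ^ 2 * fv x + η * gv x := by ring
      _ = η ^ 2 * fv x + (q : ℂ) * fv x := by rw [h2 x]
      _ = (η ^ 2 + (q : ℂ)) * fv x := by ring
  by_cases hfe : ∃ x, fv x ≠ 0
  · -- fv is a nonzero eigenvector of the adjacency matrix
    obtain ⟨x0, hx0⟩ := hfe
    have hfv0 : fv ≠ 0 := Function.ne_iff.mpr ⟨x0, hx0⟩
    have hη0 : η ≠ 0 := by
      rintro rfl
      have h0 := hkey x0
      simp only [zero_mul, ne_eq, OfNat.ofNat_ne_zero, not_false_eq_true, zero_pow,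
        zero_add] at h0
      exact hx0 ((mul_eq_zero.mp h0.symm).resolve_left hqC)
    set μ : ℂ := (η ^ 2 + (q : ℂ)) / η with hμdef
    have hAf : ∀ x, (G.adjMatrix ℂ *ᵥ fv) x = μ * fv x := by
      intro x
      apply mul_left_cancel₀ hη0
      rw [hkey x, hμdef]
      field_simp
    obtain ⟨him, hspec⟩ := adj_eigenvalue_real_mem G μ fv hfv0 hAf
    have habs : ‖μ‖ ≤ ((q + 1 : ℕ) : ℝ) :=
      adj_eigenvalue_abs_le G (q + 1) hdeg μ fv hfv0 hAf
    set lam : ℝ := μ.re with hlamdef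
    have hμre : ((lam : ℝ) : ℂ) = μ := Complex.conj_eq_iff_re.mp (Complex.conj_eq_iff_im.mpr him)
    have hlam_abs : |lam| ≤ (q : ℝ) + 1 := by
      rw [← hμre, Complex.norm_real, Real.norm_eq_abs] at habs
      push_cast at habs
      exact habs
    have hle : (lam : ℂ) * η = η ^ 2 + (q : ℂ) := by
      rw [hμre, hμdef]
      field_simp
    have hquartic : (η ^ 2) ^ 2 + ((q : ℂ) + q - (lam : ℂ) ^ 2) * η ^ 2 + (q : ℂ) * q = 0 := by
      linear_combination (-(η ^ 2 + (q : ℂ) + (lam : ℂ) * η)) * hle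
    refine ⟨Or.inr (Or.inr ⟨lam, hspec, hquartic⟩), ?_⟩
    -- modulus bound
    by_cases him' : η.im = 0
    · have hηx : η = ((η.re : ℝ) : ℂ) :=
        (Complex.conj_eq_iff_re.mp (Complex.conj_eq_iff_im.mpr him')).symm
      set x : ℝ := η.re with hxdef
      have hreal : lam * x = x ^ 2 + (q : ℝ) := by
        have := hle
        rw [hηx] at this
        exact_mod_cast this
      have hxpos : (0 : ℝ) < x ^ 2 + q := by positivity
      have h3 : x ^ 2 + (q : ℝ) ≤ ((q : ℝ) + 1) * |x| := by
        calc x ^ 2 + (q : ℝ) = |lam * x| := by rw [hreal, abs_of_pos hxpos]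
          _ = |lam| * |x| := abs_mul _ _
          _ ≤ ((q : ℝ) + 1) * |x| := mul_le_mul_of_nonneg_right hlam_abs (abs_nonneg _)
      rw [hηx, Complex.norm_real, Real.norm_eq_abs]
      by_contra hcon
      push_neg at hcon
      nlinarith [sq_abs x, abs_nonneg x]
    · -- non-real eigenvalue: |η|² = q
      have hcne : (starRingEnd ℂ) η ≠ η := fun h => him' (Complex.conj_eq_iff_im.mp h)
      have hle' : (lam : ℂ) * (starRingEnd ℂ) η = ((starRingEnd ℂ) η) ^ 2 + (q : ℂ) := by
        have := congrArg (starRingEnd ℂ) hle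
        simpa [_root_.map_mul, map_add, map_pow, Complex.conj_ofReal] using this
      have hsub : (lam : ℂ) * (η - (starRingEnd ℂ) η)
          = (η + (starRingEnd ℂ) η) * (η - (starRingEnd ℂ) η) := by
        linear_combination hle - hle'
      have hne0 : η - (starRingEnd ℂ) η ≠ 0 := sub_ne_zero.mpr (Ne.symm hcne)
      have hlam_eq : (lam : ℂ) = η + (starRingEnd ℂ) η := mul_right_cancel₀ hne0 hsub
      have hnq : η * (starRingEnd ℂ) η = (q : ℂ) := by
        linear_combination hle - η * hlam_eq
      have hnsq : Complex.normSq η = (q : ℝ) := by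
        have := hnq
        rw [Complex.mul_conj] at this
        exact_mod_cast this
      have habs2 : ‖η‖ ^ 2 = (q : ℝ) := by
        rw [Complex.sq_norm, hnsq]
      nlinarith [norm_nonneg η]
  · -- fv = 0 : then η² = 1
    push_neg at hfe
    obtain ⟨e0, he0⟩ := Function.ne_iff.mp hv0
    have he0' : v e0 ≠ 0 := he0
    have k1 : η * v e0 = -v e0.symm := by
      rw [hstar e0, hfe e0.snd, zero_sub]
    have k2 : η * v e0.symm = -v e0 := by
      have := hstar e0.symm
      rw [hfe e0.symm.snd] at this
      simpa using this
    have hsq : η ^ 2 = 1 := by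
      have hz : (η ^ 2 - 1) * v e0 = 0 := by
        linear_combination η * k1 - k2
      rcases mul_eq_zero.mp hz with h | h
      · exact sub_eq_zero.mp h
      · exact absurd h he0'
    have hd : η = 1 ∨ η = -1 := by
      have hz : (η - 1) * (η + 1) = 0 := by linear_combination hsq
      rcases mul_eq_zero.mp hz with h | h
      · exact Or.inl (sub_eq_zero.mp h)
      · exact Or.inr (eq_neg_of_add_eq_zero_left h)
    refine ⟨Or.inl hd, ?_⟩
    rcases hd with rfl | rfl <;> simpa using hq1
end
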